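/- arXiv:2601.17850 — 11 statements merged into one kernel-verified Lean document; each statement's English description precedes it below -/
import Mathlib

section
/- For probability mass functions p⁰, …, p^d with full support on a finite alphabet X and orders α₀,…,α_d ∈ ℝ with ∑ₖ αₖ = 1 and αₖ ≥ 0 for all k (with α⋆ := maxₖ αₖ < 1), D_α(p⁰,…,p^d) = 0 if and only if p⁰ = p¹ = ⋯ = p^d. -/
/-- The multivariate Rényi divergence vanishes iff all the distributions
are equal (orders summing to 1, all positive, with `α⋆ = max α < 1`). -/
theorem multivariate_renyi_eq_zero_iff
    {X : Type*} [Fintype X] [Nonempty X] (d : ℕ)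
    (p : Fin (d + 1) → X → ℝ) (α : Fin (d + 1) → ℝ) (αstar : ℝ)
    (hp_pos : ∀ k x, 0 < p k x) (hp_le : ∀ k x, p k x ≤ 1)
    (hp_sum : ∀ k, ∑ x, p k x = 1)
    (hα_sum : ∑ k, α k = 1) (hα_pos : ∀ k, 0 < α k)
    (hαstar_ub : ∀ k, α k ≤ αstar) (hαstar_mem : ∃ k, α k = αstar)
    (hαstar_lt : αstar < 1) :
    (1 / (αstar - 1)) * Real.log (∑ x, ∏ k, (p k x) ^ (α k)) = 0 ↔
      ∀ k, p k = p 0 := by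
  have hαne : (1 / (αstar - 1)) ≠ 0 := by
    have : αstar - 1 ≠ 0 := by linarith
    simp [this]
  set S : ℝ := ∑ x, ∏ k, (p k x) ^ (α k) with hS
  have hSpos : 0 < S := by
    apply Finset.sum_pos
    · intro x _
      exact Finset.prod_pos fun k _ => Real.rpow_pos_of_pos (hp_pos k x) _
    · exact Finset.univ_nonempty
  constructor
  · intro h0
    have hlog : Real.log S = 0 := by
      rcases mul_eq_zero.1 h0 with h | h
      · exact absurd h hαne
      · exact h
    have hS1 : S = 1 := by
      have := Real.exp_log hSpos
      rw [hlog] at this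
      simpa using this.symm
    by_contra hne
    push_neg at hne
    obtain ⟨k₀, hk₀⟩ := hne
    have hx : ∃ x, p k₀ x ≠ p 0 x := by
      by_contra hx
      push_neg at hx
      exact hk₀ (funext hx)
    obtain ⟨x₀, hx₀⟩ := hx
    -- weak AM-GM at every point
    have hle : ∀ x, ∏ k, (p k x) ^ (α k) ≤ ∑ k, α k * p k x := fun x =>
      Real.geom_mean_le_arith_mean_weighted _ _ _ (fun k _ => (hα_pos k).le) hα_sum
        (fun k _ => (hp_pos k x).le)
    -- strict AM-GM at x₀
    have hstrict : ∏ k, (p k x₀) ^ (α k) < ∑ k, α k * p k x₀ := by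
      have hjensen : ∑ k, α k • Real.log (p k x₀) < Real.log (∑ k, α k • p k x₀) := by
        refine strictConcaveOn_log_Ioi.lt_map_sum (fun k _ => hα_pos k) hα_sum
          (fun k _ => hp_pos k x₀) ?_
        exact ⟨k₀, Finset.mem_univ _, 0, Finset.mem_univ _, hx₀⟩
      have hsumpos : 0 < ∑ k, α k • p k x₀ :=
        Finset.sum_pos (fun k _ => smul_pos (hα_pos k) (hp_pos k x₀)) Finset.univ_nonempty
      have := Real.exp_lt_exp.2 hjensen
      rw [Real.exp_log hsumpos, Real.exp_sum] at this
      have hprod : ∀ k, Real.exp (α k • Real.log (p k x₀)) = (p k x₀) ^ (α k) := by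
        intro k
        rw [smul_eq_mul, mul_comm, Real.exp_mul, Real.exp_log (hp_pos k x₀)]
      simp only [hprod] at this
      simpa [smul_eq_mul] using this
    -- sum up: S < 1
    have hSlt : S < 1 := by
      have : S < ∑ x, ∑ k, α k * p k x := by
        apply Finset.sum_lt_sum (fun x _ => hle x) ⟨x₀, Finset.mem_univ _, hstrict⟩
      calc S < ∑ x, ∑ k, α k * p k x := this
        _ = ∑ k, α k * ∑ x, p k x := by
            rw [Finset.sum_comm]; simp [Finset.mul_sum]
        _ = 1 := by simp [hp_sum, hα_sum]
    exact absurd hS1 hSlt.ne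
  · intro heq
    have hSx : ∀ x, ∏ k, (p k x) ^ (α k) = p 0 x := by
      intro x
      have : ∀ k, (p k x) ^ (α k) = (p 0 x) ^ (α k) := fun k => by rw [heq k]
      rw [Finset.prod_congr rfl fun k _ => this k,
        ← Real.rpow_sum_of_pos (hp_pos 0 x) α Finset.univ, hα_sum, Real.rpow_one]
    have : S = 1 := by rw [hS, Finset.sum_congr rfl fun x _ => hSx x, hp_sum 0]
    rw [this]
    simp
end

section
/- The multivariate Rényi divergence satisfies the data processing inequality under stochastic maps: if T is a stochastic operator (row-stochastic matrix) from alphabet X to alphabet Y, then D_α(p⁰,…,p^d) ≥ D_α(T(p⁰),…,T(p^d)), where orders satisfy ∑ₖ αₖ = 1 with either (i) all αₖ ≥ 0, or (ii) some α_l > 1 and αₖ ≤ 0 for k ≠ l. -/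
/-!
Since `t` is column-stochastic, `∑ₓ ∏ₖ pᵏ(x)^{αₖ} = ∑_y ∑ₓ t(y|x) ∏ₖ pᵏ(x)^{αₖ}`, so it suffices to
compare, for each `y`, the sum `∑ₓ t(y|x) ∏ₖ pᵏ(x)^{αₖ}` with `∏ₖ (∑ₓ t(y|x) pᵏ(x))^{αₖ}`. In case
(i) this is Hölder's inequality for the weight `t(y|·)`, and the prefactor `1/(α⋆ - 1)` is negative;
in case (ii) it is the reverse Hölder inequality, and the prefactor is positive. Both inequalities
follow by applying, at each point, the weighted AM-GM inequality, resp. its reverse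
`∑ wᵢ zᵢ ≤ ∏ zᵢ^{wᵢ}` for weights with exactly one positive entry, to `hᵢ(x) / ∑ₓ g(x) hᵢ(x)`, and
integrating against `g`.
-/

open Finset

namespace Real

theorem arith_mean_le_geom_mean_weighted_of_nonpos_except {ι : Type*} [Fintype ι]
    (w z : ι → ℝ) (l : ι) (hl : 0 < w l) (hw : ∀ i ≠ l, w i ≤ 0) (hw1 : ∑ i, w i = 1)
    (hz : ∀ i, 0 < z i) : ∑ i, w i * z i ≤ ∏ i, z i ^ w i := by
  classical
  set P := ∏ i, z i ^ w i
  have hP : 0 < P := prod_pos fun i _ => rpow_pos_of_pos (hz i) _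
  -- `z l` is the geometric mean of `P` and the `z k`, `k ≠ l`, with the nonnegative weights `v`.
  let v : ι → ℝ := fun i => if i = l then 1 / w l else -w i / w l
  let Z : ι → ℝ := fun i => if i = l then P else z i
  have hv : ∀ i, 0 ≤ v i := fun i => by
    by_cases hi : i = l
    · simp only [v, if_pos hi]
      positivity
    · simp only [v, if_neg hi]
      exact div_nonneg (neg_nonneg.2 (hw i hi)) hl.le
  have hZ : ∀ i, 0 ≤ Z i := fun i => by
    by_cases hi : i = l
    · simp only [Z, if_pos hi]
      exact hP.le
    · simp only [Z, if_neg hi]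
      exact (hz i).le
  have hv1 : ∑ i, v i = 1 := by
    have : ∀ i, v i = ((if i = l then 1 + w l else 0) - w i) / w l := fun i => by
      by_cases hi : i = l <;> simp [v, hi]
    simp_rw [this, ← sum_div, sum_sub_distrib, sum_ite_eq', mem_univ, if_true, hw1]
    field_simp
    ring
  have hgeom : ∏ i, Z i ^ v i = z l := by
    have : ∀ i, Z i ^ v i =
        (if i = l then P ^ (1 / w l) * z l else 1) * (z i ^ w i) ^ (-1 / w l) := fun i => by
      by_cases hi : i = l
      · subst hi
        simp only [Z, v, if_true, ← rpow_mul (hz _).le, mul_div_cancel₀ _ hl.ne', mul_assoc,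
          rpow_neg_one, mul_inv_cancel₀ (hz i).ne', mul_one]
      · simp only [Z, v, hi, if_false, one_div, ← rpow_mul (hz _).le, one_mul]
        ring_nf
    rw [prod_congr rfl fun i _ => this i, prod_mul_distrib, prod_ite_eq', if_pos (mem_univ _),
      finsetProd_rpow _ _ (fun i _ => (rpow_pos_of_pos (hz i) _).le), mul_right_comm,
      ← rpow_add hP, ← add_div, add_neg_cancel, zero_div, rpow_zero, one_mul]
  have harith : ∑ i, v i * Z i = (P - ∑ i, w i * z i) / w l + z l := by
    have : ∀ i, v i * Z i = ((if i = l then P + w l * z l else 0) - w i * z i) / w l :=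
      fun i => by
        by_cases hi : i = l
        · subst hi
          simp only [v, Z, if_true, one_div, add_sub_cancel_right]
          field_simp
        · simp only [v, Z, if_neg hi]
          ring
    simp_rw [this, ← sum_div, sum_sub_distrib, sum_ite_eq', mem_univ, if_true]
    field_simp
    ring
  have key := geom_mean_le_arith_mean_weighted univ v Z (fun i _ => hv i) hv1 (fun i _ => hZ i)
  rwa [hgeom, harith, le_add_iff_nonneg_left, le_div_iff₀ hl, zero_mul, sub_nonneg] at key

variable {ι κ : Type*} [Fintype ι] [Fintype κ]

theorem sum_mul_prod_div_rpow (w : ι → ℝ) (g : κ → ℝ) (h : ι → κ → ℝ) (c : ι → ℝ)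
    (hh : ∀ i x, 0 ≤ h i x) (hc : ∀ i, 0 ≤ c i) :
    ∑ x, g x * ∏ i, (h i x / c i) ^ w i = (∑ x, g x * ∏ i, h i x ^ w i) / ∏ i, c i ^ w i := by
  rw [sum_div]
  refine sum_congr rfl fun x _ => ?_
  rw [mul_div_assoc, ← prod_div_distrib]
  exact congrArg _ (prod_congr rfl fun i _ => div_rpow (hh i x) (hc i) _)

theorem sum_mul_sum_mul_div_eq_one (w : ι → ℝ) (hw1 : ∑ i, w i = 1) (g : κ → ℝ)
    (h : ι → κ → ℝ) (hF : ∀ i, ∑ x, g x * h i x ≠ 0) :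
    ∑ x, g x * ∑ i, w i * (h i x / ∑ y, g y * h i y) = 1 := by
  simp_rw [mul_sum]
  rw [sum_comm, ← hw1]
  refine sum_congr rfl fun i _ => ?_
  calc ∑ x, g x * (w i * (h i x / ∑ y, g y * h i y))
      = w i * ((∑ x, g x * h i x) / ∑ y, g y * h i y) := by
        rw [sum_div, mul_sum]
        exact sum_congr rfl fun x _ => by ring
    _ = w i := by rw [div_self (hF i), mul_one]

theorem sum_mul_prod_rpow_le_prod_sum_mul_rpow (w : ι → ℝ) (g : κ → ℝ) (h : ι → κ → ℝ)
    (hw : ∀ i, 0 ≤ w i) (hw1 : ∑ i, w i = 1) (hg : ∀ x, 0 ≤ g x) (hh : ∀ i x, 0 ≤ h i x)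
    (hF : ∀ i, 0 < ∑ x, g x * h i x) :
    ∑ x, g x * ∏ i, h i x ^ w i ≤ ∏ i, (∑ x, g x * h i x) ^ w i := by
  rw [← div_le_one (prod_pos fun i _ => rpow_pos_of_pos (hF i) _),
    ← sum_mul_prod_div_rpow w g h _ hh fun i => (hF i).le,
    ← sum_mul_sum_mul_div_eq_one w hw1 g h fun i => (hF i).ne']
  gcongr with x _
  · exact hg x
  · exact geom_mean_le_arith_mean_weighted univ w _ (fun i _ => hw i) hw1
      fun i _ => div_nonneg (hh i x) (hF i).le

theorem prod_sum_mul_rpow_le_sum_mul_prod_rpow (w : ι → ℝ) (g : κ → ℝ) (h : ι → κ → ℝ)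
    (l : ι) (hl : 0 < w l) (hw : ∀ i ≠ l, w i ≤ 0) (hw1 : ∑ i, w i = 1) (hg : ∀ x, 0 ≤ g x)
    (hh : ∀ i x, 0 < h i x) (hF : ∀ i, 0 < ∑ x, g x * h i x) :
    ∏ i, (∑ x, g x * h i x) ^ w i ≤ ∑ x, g x * ∏ i, h i x ^ w i := by
  rw [← one_le_div (prod_pos fun i _ => rpow_pos_of_pos (hF i) _),
    ← sum_mul_prod_div_rpow w g h _ (fun i x => (hh i x).le) fun i => (hF i).le,
    ← sum_mul_sum_mul_div_eq_one w hw1 g h fun i => (hF i).ne']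
  gcongr with x _
  · exact hg x
  · exact arith_mean_le_geom_mean_weighted_of_nonpos_except w _ l hl hw hw1
      fun i => div_pos (hh i x) (hF i)

end Real

open Real

theorem multivariate_renyi_dpi_general
    {X Y : Type*} [Fintype X] [Fintype Y] [Nonempty X] (d : ℕ)
    (p : Fin (d + 1) → X → ℝ) (α : Fin (d + 1) → ℝ) (αstar : ℝ)
    (t : Y → X → ℝ)
    (hp_pos : ∀ k x, 0 < p k x)
    (ht_nonneg : ∀ y x, 0 ≤ t y x) (ht_sum : ∀ x, ∑ y, t y x = 1)
    (hq_pos : ∀ k y, 0 < ∑ x, t y x * p k x)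
    (hα_sum : ∑ k, α k = 1)
    (hα_cond : (∀ k, 0 ≤ α k) ∨
      (∃ l, 1 < α l ∧ ∀ k, k ≠ l → α k ≤ 0))
    (hαstar_ub : ∀ k, α k ≤ αstar) (hαstar_mem : ∃ k, α k = αstar)
    (hαstar_ne : αstar ≠ 1) :
    (1 / (αstar - 1)) * Real.log (∑ y, ∏ k, (∑ x, t y x * p k x) ^ (α k)) ≤
      (1 / (αstar - 1)) * Real.log (∑ x, ∏ k, (p k x) ^ (α k)) := by
  have hX : ∑ x, ∏ k, p k x ^ α k = ∑ y, ∑ x, t y x * ∏ k, p k x ^ α k := by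
    rw [sum_comm]
    simp_rw [← sum_mul, ht_sum, one_mul]
  have hX_pos : 0 < ∑ x, ∏ k, p k x ^ α k :=
    sum_pos (fun x _ => prod_pos fun k _ => rpow_pos_of_pos (hp_pos k x) _) univ_nonempty
  have hY : (univ : Finset Y).Nonempty :=
    nonempty_of_sum_ne_zero (ht_sum (Classical.arbitrary X) ▸ one_ne_zero)
  have hY_pos : 0 < ∑ y, ∏ k, (∑ x, t y x * p k x) ^ α k :=
    sum_pos (fun y _ => prod_pos fun k _ => rpow_pos_of_pos (hq_pos k y) _) hY
  rcases hα_cond with hα_nonneg | ⟨l, hl, hα_nonpos⟩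
  · obtain ⟨k, rfl⟩ := hαstar_mem
    have hαk : α k < 1 :=
      (hα_sum ▸ single_le_sum (fun k _ => hα_nonneg k) (mem_univ k)).lt_of_ne hαstar_ne
    refine mul_le_mul_of_nonpos_left (log_le_log hX_pos ?_)
      (by rw [one_div, inv_nonpos]; linarith)
    rw [hX]
    exact sum_le_sum fun y _ => sum_mul_prod_rpow_le_prod_sum_mul_rpow α (t y) p hα_nonneg
      hα_sum (ht_nonneg y) (fun k x => (hp_pos k x).le) (hq_pos · y)
  · have hαstar : 1 < αstar := hl.trans_le (hαstar_ub l)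
    refine mul_le_mul_of_nonneg_left (log_le_log hY_pos ?_)
      (by rw [one_div, inv_nonneg]; linarith)
    rw [hX]
    exact sum_le_sum fun y _ => prod_sum_mul_rpow_le_sum_mul_prod_rpow α (t y) p l (by linarith)
      hα_nonpos hα_sum (ht_nonneg y) hp_pos (hq_pos · y)

/-- Data processing inequality for the multivariate Rényi divergence under
a stochastic operator `t` (with `t y x = t(y|x)` a conditional PMF on `Y`
for each `x`). Orders sum to 1 and satisfy either (i) all `α k ≥ 0`, or
(ii) some `α l > 1` and `α k ≤ 0` for `k ≠ l`. -/
theorem multivariate_renyi_dpi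
    {X Y : Type*} [Fintype X] [Fintype Y] [Nonempty X] [Nonempty Y] (d : ℕ)
    (p : Fin (d + 1) → X → ℝ) (α : Fin (d + 1) → ℝ) (αstar : ℝ)
    (t : Y → X → ℝ)
    (hp_pos : ∀ k x, 0 < p k x) (hp_sum : ∀ k, ∑ x, p k x = 1)
    (ht_nonneg : ∀ y x, 0 ≤ t y x) (ht_sum : ∀ x, ∑ y, t y x = 1)
    (hq_pos : ∀ k y, 0 < ∑ x, t y x * p k x)
    (hα_sum : ∑ k, α k = 1)
    (hα_cond : (∀ k, 0 ≤ α k) ∨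
      (∃ l, 1 < α l ∧ ∀ k, k ≠ l → α k ≤ 0))
    (hαstar_ub : ∀ k, α k ≤ αstar) (hαstar_mem : ∃ k, α k = αstar)
    (hαstar_ne : αstar ≠ 1) :
    (1 / (αstar - 1)) * Real.log (∑ y, ∏ k, (∑ x, t y x * p k x) ^ (α k)) ≤
      (1 / (αstar - 1)) * Real.log (∑ x, ∏ k, (p k x) ^ (α k)) :=
  multivariate_renyi_dpi_general d p α αstar t hp_pos ht_nonneg ht_sum hq_pos hα_sum hα_cond
    hαstar_ub hαstar_mem hαstar_ne
end

section
/- The conditional multivariate Rényi divergence satisfies the data processing inequality with respect to the main system: for conditional PMFs p⁰_{X|G},…,p^d_{X|G} and a conditional stochastic operator T mapping each p^k_{X|G} to q^k_{Y|G}(y|g) = ∑ₓ t(y|x,g) p^k_{X|G}(x|g), one has D_{α,β}(p⁰_{X|G},…,p^d_{X|G} | p_G) ≥ D_{α,β}(q⁰_{Y|G},…,q^d_{Y|G} | p_G) for every β ≥ 0. -/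
/-!
For each `g` compare the inner sums `Z_p = ∑ₓ ∏ₖ pₖ(x)^αₖ` and `Z_q = ∑_y ∏ₖ qₖ(y)^αₖ`.
Since `∑ α = 1`, each summand `∏ₖ (t(y|x) pₖ(x))^αₖ` equals `t(y|x) ∏ₖ pₖ(x)^αₖ`, so summing over
`y` first rewrites `Z_p` as `∑_y ∑ₓ ∏ₖ (t(y|x) pₖ(x))^αₖ`, and `Z_q` sums the same rows after
the sums over `x` are taken inside the powers. For `α ≥ 0` Hölder's inequality gives
`Z_p ≤ Z_q`. For `α_l > 1` and the other orders `≤ 0`, Hölder with the exponents `1/α_l` and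
`-αₖ/α_l` gives the reverse inequality `Z_q ≤ Z_p`. In either case `α⋆ - 1` has the sign that
turns the comparison into the claimed inequality, since `x ↦ x^(1/β)` and `log` are monotone.
-/

open Finset Real

section Holder

variable {ι κ : Type*} [Fintype ι] [Fintype κ]

theorem sum_prod_rpow_le_prod_sum_rpow {w : κ → ℝ} (hw : ∀ k, 0 ≤ w k) (hw1 : ∑ k, w k = 1)
    {a : κ → ι → ℝ} (ha : ∀ k i, 0 ≤ a k i) (hS : ∀ k, 0 < ∑ i, a k i) :
    ∑ i, ∏ k, a k i ^ w k ≤ ∏ k, (∑ i, a k i) ^ w k := by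
  set S : κ → ℝ := fun k => ∑ i, a k i
  -- normalise each row to sum one and apply weighted AM-GM termwise
  have hnormalised : ∑ i, ∏ k, (a k i / S k) ^ w k ≤ 1 :=
    calc ∑ i, ∏ k, (a k i / S k) ^ w k
        ≤ ∑ i, ∑ k, w k * (a k i / S k) := sum_le_sum fun i _ =>
          geom_mean_le_arith_mean_weighted univ w _ (fun k _ => hw k) hw1
            fun k _ => div_nonneg (ha k i) (hS k).le
      _ = ∑ k, w k := by
          rw [sum_comm]
          refine sum_congr rfl fun k _ => ?_
          rw [← mul_sum, ← sum_div, div_self (hS k).ne', mul_one]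
      _ = 1 := hw1
  have hsplit : ∀ i, ∏ k, a k i ^ w k = (∏ k, S k ^ w k) * ∏ k, (a k i / S k) ^ w k := fun i => by
    rw [← prod_mul_distrib]
    refine prod_congr rfl fun k _ => ?_
    rw [← mul_rpow (hS k).le (div_nonneg (ha k i) (hS k).le), mul_div_cancel₀ _ (hS k).ne']
  rw [sum_congr rfl fun i _ => hsplit i, ← mul_sum]
  exact mul_le_of_le_one_right (prod_nonneg fun k _ => rpow_nonneg (hS k).le _) hnormalised

theorem prod_mul_rpow_of_sum_eq_one {w : κ → ℝ} (hw1 : ∑ k, w k = 1) {c : ℝ} (hc : 0 ≤ c)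
    {b : κ → ℝ} (hb : ∀ k, 0 ≤ b k) :
    ∏ k, (c * b k) ^ w k = c * ∏ k, b k ^ w k := by
  rcases hc.eq_or_lt with rfl | hc
  · obtain ⟨k, -, hk⟩ := exists_ne_zero_of_sum_ne_zero (hw1.trans_ne one_ne_zero)
    simp [zero_rpow hk, prod_eq_zero (mem_univ k)]
  · rw [prod_congr rfl fun k _ => mul_rpow hc.le (hb k), prod_mul_distrib,
      ← rpow_sum_of_pos hc, hw1, rpow_one]

theorem sum_mul_prod_rpow_le_prod_sum_mul_rpow {w : κ → ℝ} (hw : ∀ k, 0 ≤ w k)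
    (hw1 : ∑ k, w k = 1) {c : ι → ℝ} (hc : ∀ i, 0 ≤ c i) {b : κ → ι → ℝ}
    (hb : ∀ k i, 0 ≤ b k i) (hS : ∀ k, 0 < ∑ i, c i * b k i) :
    ∑ i, c i * ∏ k, b k i ^ w k ≤ ∏ k, (∑ i, c i * b k i) ^ w k := by
  simp_rw [← prod_mul_rpow_of_sum_eq_one hw1 (hc _) (hb · _)]
  exact sum_prod_rpow_le_prod_sum_rpow hw hw1 (fun k i => mul_nonneg (hc i) (hb k i)) hS

end Holder

section ReverseHolderExponent

variable {κ : Type*} [DecidableEq κ] {α : κ → ℝ} {l : κ}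

/-- The Hölder weights for which `(∏ₘ bₘ ^ αₘ) ^ w l * ∏_{k ≠ l} bₖ ^ w k = b l`. -/
noncomputable def reverseHolderExponent (α : κ → ℝ) (l k : κ) : ℝ :=
  if k = l then 1 / α l else -α k / α l

theorem reverseHolderExponent_nonneg (hα : ∀ k ≠ l, α k ≤ 0) (hl : 0 < α l) (k : κ) :
    0 ≤ reverseHolderExponent α l k := by
  unfold reverseHolderExponent
  split_ifs with hk
  · positivity
  · exact div_nonneg (neg_nonneg.2 (hα k hk)) hl.le

theorem update_pos_of_pos {x : κ → ℝ} (hx : ∀ k, 0 < x k) {a : ℝ} (ha : 0 < a) (k : κ) :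
    0 < Function.update x l a k :=
  (Function.forall_update_iff x fun _ v => 0 < v).2 ⟨ha, fun k _ => hx k⟩ k

variable [Fintype κ]

theorem log_prod_rpow_eq_add_sum_erase (l : κ) {x : κ → ℝ} (hx : ∀ k, 0 < x k)
    (e : κ → ℝ) :
    log (∏ k, x k ^ e k) = e l * log (x l) + ∑ k ∈ univ.erase l, e k * log (x k) := by
  rw [log_prod fun k _ => (rpow_pos_of_pos (hx k) _).ne', ← add_sum_erase _ _ (mem_univ l)]
  simp only [log_rpow (hx _)]

theorem sum_erase_reverseHolderExponent_mul (f : κ → ℝ) :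
    ∑ k ∈ univ.erase l, reverseHolderExponent α l k * f k
      = -(∑ k ∈ univ.erase l, α k * f k) / α l := by
  rw [neg_div, sum_div, ← sum_neg_distrib]
  refine sum_congr rfl fun k hk => ?_
  simp only [reverseHolderExponent, if_neg (ne_of_mem_erase hk)]
  ring

theorem sum_reverseHolderExponent (hα1 : ∑ k, α k = 1) (hl : α l ≠ 0) :
    ∑ k, reverseHolderExponent α l k = 1 := by
  have h := sum_erase_reverseHolderExponent_mul (α := α) (l := l) fun _ => 1
  rw [← add_sum_erase _ _ (mem_univ l)] at hα1
  simp only [mul_one] at h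
  rw [← add_sum_erase _ _ (mem_univ l), h, reverseHolderExponent, if_pos rfl]
  field_simp
  linarith

theorem log_prod_update_rpow_reverseHolderExponent {x : κ → ℝ} (hx : ∀ k, 0 < x k) {A : ℝ}
    (hA : 0 < A) :
    log (∏ k, Function.update x l A k ^ reverseHolderExponent α l k)
      = (log A - ∑ k ∈ univ.erase l, α k * log (x k)) / α l := by
  rw [log_prod_rpow_eq_add_sum_erase l (update_pos_of_pos hx hA),
    sum_erase_reverseHolderExponent_mul, sum_congr rfl fun k hk => by rw [Function.update_of_ne (ne_of_mem_erase hk)],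
    Function.update_self, reverseHolderExponent, if_pos rfl]
  ring

end ReverseHolderExponent

section ReverseHolder

variable {ι κ : Type*} [Fintype ι] [Fintype κ]

theorem prod_sum_mul_rpow_le_sum_mul_prod_rpow {α : κ → ℝ} {l : κ} (hα : ∀ k ≠ l, α k ≤ 0)
    (hα1 : ∑ k, α k = 1) {c : ι → ℝ} (hc : ∀ i, 0 ≤ c i) {b : κ → ι → ℝ}
    (hb : ∀ k i, 0 < b k i) (hS : ∀ k, 0 < ∑ i, c i * b k i) :
    ∏ k, (∑ i, c i * b k i) ^ α k ≤ ∑ i, c i * ∏ k, b k i ^ α k := by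
  classical
  have hl : 0 < α l := by
    have : ∑ k ∈ univ.erase l, α k ≤ 0 := sum_nonpos fun k hk => hα k (ne_of_mem_erase hk)
    rw [← add_sum_erase _ _ (mem_univ l)] at hα1
    linarith
  set B : ι → ℝ := fun i => ∏ k, b k i ^ α k
  have hB : ∀ i, 0 < B i := fun i => prod_pos fun k _ => rpow_pos_of_pos (hb k i) _
  obtain ⟨i₀, -, hi₀⟩ := exists_lt_of_sum_lt (f := fun _ ↦ (0 : ℝ)) (sum_const_zero.trans_lt (hS l))
  have hc₀ : 0 < c i₀ := pos_of_mul_pos_left hi₀ (hb l i₀).le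
  have hA : 0 < ∑ i, c i * B i :=
    sum_pos' (fun i _ => mul_nonneg (hc i) (hB i).le) ⟨i₀, mem_univ _, mul_pos hc₀ (hB i₀)⟩
  -- Hölder for the rows `b k` with the row `b l` replaced by `B`
  have hb' : ∀ k i, 0 < Function.update b l B k i :=
    (Function.forall_update_iff b fun _ v => ∀ i, 0 < v i).2 ⟨hB, fun k _ => hb k⟩
  have holder := sum_mul_prod_rpow_le_prod_sum_mul_rpow
    (reverseHolderExponent_nonneg hα hl) (sum_reverseHolderExponent hα1 hl.ne') hc
    (fun k i => (hb' k i).le) fun k => sum_pos'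
      (fun i _ => mul_nonneg (hc i) (hb' k i).le) ⟨i₀, mem_univ _, mul_pos hc₀ (hb' k i₀)⟩
  have hrow : ∀ i, ∏ k, Function.update b l B k i ^ reverseHolderExponent α l k = b l i :=
    fun i => by
      simp only [Function.apply_update (fun (_ : κ) (v : ι → ℝ) => v i)]
      refine log_injOn_pos (prod_pos fun k _ =>
        rpow_pos_of_pos (update_pos_of_pos (hb · i) (hB i) k) _) (hb l i) ?_
      rw [log_prod_update_rpow_reverseHolderExponent (hb · i) (hB i),
        log_prod_rpow_eq_add_sum_erase l (hb · i)]
      field_simp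
      ring
  simp only [hrow, Function.apply_update (fun (_ : κ) (v : ι → ℝ) => ∑ i, c i * v i)] at holder
  -- after taking logarithms the claim is `α l` times `holder`
  rw [← log_le_log_iff (hS l) (prod_pos fun k _ => rpow_pos_of_pos (update_pos_of_pos hS hA k) _),
    log_prod_update_rpow_reverseHolderExponent hS hA, le_div_iff₀ hl] at holder
  rw [← log_le_log_iff (prod_pos fun k _ => rpow_pos_of_pos (hS k) _) hA,
    log_prod_rpow_eq_add_sum_erase l hS]
  linarith

end ReverseHolder

section DataProcessing

variable {X Y κ : Type*} [Fintype X] [Fintype Y] [Fintype κ]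

theorem sum_eq_sum_sum_mul_of_sum_eq_one {t : Y → X → ℝ} (ht1 : ∀ x, ∑ y, t y x = 1)
    (f : X → ℝ) : ∑ x, f x = ∑ y, ∑ x, t y x * f x := by
  rw [sum_comm]
  simp only [← sum_mul, ht1, one_mul]

theorem sum_prod_rpow_le_sum_prod_sum_mul_rpow {α : κ → ℝ} (hα : ∀ k, 0 ≤ α k)
    (hα1 : ∑ k, α k = 1) {t : Y → X → ℝ} (ht : ∀ y x, 0 ≤ t y x) (ht1 : ∀ x, ∑ y, t y x = 1)
    {p : κ → X → ℝ} (hp : ∀ k x, 0 ≤ p k x) (hq : ∀ k y, 0 < ∑ x, t y x * p k x) :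
    ∑ x, ∏ k, p k x ^ α k ≤ ∑ y, ∏ k, (∑ x, t y x * p k x) ^ α k := by
  rw [sum_eq_sum_sum_mul_of_sum_eq_one ht1]
  exact sum_le_sum fun y _ => sum_mul_prod_rpow_le_prod_sum_mul_rpow hα hα1 (ht y) hp (hq · y)

theorem sum_prod_sum_mul_rpow_le_sum_prod_rpow {α : κ → ℝ} {l : κ} (hα : ∀ k ≠ l, α k ≤ 0)
    (hα1 : ∑ k, α k = 1) {t : Y → X → ℝ} (ht : ∀ y x, 0 ≤ t y x) (ht1 : ∀ x, ∑ y, t y x = 1)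
    {p : κ → X → ℝ} (hp : ∀ k x, 0 < p k x) (hq : ∀ k y, 0 < ∑ x, t y x * p k x) :
    ∑ y, ∏ k, (∑ x, t y x * p k x) ^ α k ≤ ∑ x, ∏ k, p k x ^ α k := by
  rw [sum_eq_sum_sum_mul_of_sum_eq_one ht1]
  exact sum_le_sum fun y _ => prod_sum_mul_rpow_le_sum_mul_prod_rpow hα hα1 (ht y) hp (hq · y)

end DataProcessing

theorem sum_prod_rpow_pos {ι κ : Type*} [Fintype ι] [Nonempty ι] [Fintype κ] {a : κ → ι → ℝ}
    (ha : ∀ k i, 0 < a k i) (w : κ → ℝ) : 0 < ∑ i, ∏ k, a k i ^ w k :=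
  sum_pos (fun i _ => prod_pos fun k _ => rpow_pos_of_pos (ha k i) _) univ_nonempty

theorem log_sum_mul_rpow_le_log_sum_mul_rpow {G : Type*} [Fintype G] [Nonempty G] {w : G → ℝ}
    (hw : ∀ g, 0 < w g) {r : ℝ} (hr : 0 ≤ r) {a b : G → ℝ} (ha : ∀ g, 0 < a g)
    (hab : ∀ g, a g ≤ b g) :
    log (∑ g, w g * a g ^ r) ≤ log (∑ g, w g * b g ^ r) :=
  log_le_log (sum_pos (fun g _ => mul_pos (hw g) (rpow_pos_of_pos (ha g) r)) univ_nonempty)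
    (sum_le_sum fun g _ => mul_le_mul_of_nonneg_left (rpow_le_rpow (ha g).le (hab g) hr) (hw g).le)

theorem conditional_multivariate_renyi_dpi_main_general
    {X Y G : Type*} [Fintype X] [Fintype Y] [Fintype G]
    [Nonempty X] [Nonempty Y] [Nonempty G] (d : ℕ)
    (pG : G → ℝ) (p : Fin (d + 1) → X → G → ℝ)
    (α : Fin (d + 1) → ℝ) (αstar β : ℝ)
    (t : Y → X → G → ℝ)
    (hpG_pos : ∀ g, 0 < pG g)
    (hp_pos : ∀ k x g, 0 < p k x g)
    (ht_nonneg : ∀ y x g, 0 ≤ t y x g) (ht_sum : ∀ x g, ∑ y, t y x g = 1)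
    (hq_pos : ∀ k y g, 0 < ∑ x, t y x g * p k x g)
    (hα_sum : ∑ k, α k = 1)
    (hα_cond : (∀ k, 0 ≤ α k) ∨
      (∃ l, 1 < α l ∧ ∀ k, k ≠ l → α k ≤ 0))
    (hαstar_ub : ∀ k, α k ≤ αstar) (hαstar_mem : ∃ k, α k = αstar)
    (hαstar_ne : αstar ≠ 1) (hβ : 0 ≤ β) :
    (β / (αstar - 1)) * Real.log
        (∑ g, pG g *
          (∑ y, ∏ k, (∑ x, t y x g * p k x g) ^ (α k)) ^ (1 / β)) ≤
      (β / (αstar - 1)) * Real.log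
        (∑ g, pG g * (∑ x, ∏ k, (p k x g) ^ (α k)) ^ (1 / β)) := by
  have hβ_inv : 0 ≤ 1 / β := one_div_nonneg.2 hβ
  rcases hα_cond with hα_nonneg | ⟨l, hl, hα_nonpos⟩
  · obtain ⟨k, rfl⟩ := hαstar_mem
    have hαk : α k < 1 :=
      (hα_sum ▸ single_le_sum (fun k _ => hα_nonneg k) (mem_univ k)).lt_of_ne hαstar_ne
    refine mul_le_mul_of_nonpos_left ?_ (div_nonpos_of_nonneg_of_nonpos hβ (by linarith))
    exact log_sum_mul_rpow_le_log_sum_mul_rpow hpG_pos hβ_inv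
      (fun g => sum_prod_rpow_pos (hp_pos · · g) α) fun g =>
        sum_prod_rpow_le_sum_prod_sum_mul_rpow hα_nonneg hα_sum (ht_nonneg · · g) (ht_sum · g)
          (fun k x => (hp_pos k x g).le) (hq_pos · · g)
  · refine mul_le_mul_of_nonneg_left ?_ (div_nonneg hβ (by linarith [hαstar_ub l]))
    exact log_sum_mul_rpow_le_log_sum_mul_rpow hpG_pos hβ_inv
      (fun g => sum_prod_rpow_pos (hq_pos · · g) α) fun g =>
        sum_prod_sum_mul_rpow_le_sum_prod_rpow hα_nonpos hα_sum (ht_nonneg · · g) (ht_sum · g)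
          (hp_pos · · g) (hq_pos · · g)

/-- Data processing inequality for the conditional multivariate Rényi
divergence with respect to the main system: postprocessing each conditional
PMF `p k (·|g)` by a conditional stochastic operator `t(·|x,g)` does not
increase `D_{α,β}(· | p_G)`, for every `β ≥ 0`. -/
theorem conditional_multivariate_renyi_dpi_main
    {X Y G : Type*} [Fintype X] [Fintype Y] [Fintype G]
    [Nonempty X] [Nonempty Y] [Nonempty G] (d : ℕ)
    (pG : G → ℝ) (p : Fin (d + 1) → X → G → ℝ)
    (α : Fin (d + 1) → ℝ) (αstar β : ℝ)
    (t : Y → X → G → ℝ)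
    (hpG_pos : ∀ g, 0 < pG g) (hpG_sum : ∑ g, pG g = 1)
    (hp_pos : ∀ k x g, 0 < p k x g) (hp_sum : ∀ k g, ∑ x, p k x g = 1)
    (ht_nonneg : ∀ y x g, 0 ≤ t y x g) (ht_sum : ∀ x g, ∑ y, t y x g = 1)
    (hq_pos : ∀ k y g, 0 < ∑ x, t y x g * p k x g)
    (hα_sum : ∑ k, α k = 1)
    (hα_cond : (∀ k, 0 ≤ α k) ∨
      (∃ l, 1 < α l ∧ ∀ k, k ≠ l → α k ≤ 0))
    (hαstar_ub : ∀ k, α k ≤ αstar) (hαstar_mem : ∃ k, α k = αstar)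
    (hαstar_ne : αstar ≠ 1) (hβ : 0 ≤ β) :
    (β / (αstar - 1)) * Real.log
        (∑ g, pG g *
          (∑ y, ∏ k, (∑ x, t y x g * p k x g) ^ (α k)) ^ (1 / β)) ≤
      (β / (αstar - 1)) * Real.log
        (∑ g, pG g * (∑ x, ∏ k, (p k x g) ^ (α k)) ^ (1 / β)) :=
  conditional_multivariate_renyi_dpi_main_general d pG p α αstar β t hpG_pos hp_pos ht_nonneg ht_sum
    hq_pos hα_sum hα_cond hαstar_ub hαstar_mem hαstar_ne hβ
end

section
/- Data processing inequality with respect to the conditioning system: let p⁰_{X|G} be a conditional PMF, r¹_X,…,r^d_X PMFs independent of G, p_G a PMF on G, T a stochastic operator from G to H with q_H = T(p_G), and define q⁰_{X|H}(x|h) = ∑_g (p_G(g)/q_H(h)) t(h|g) p⁰_{X|G}(x|g). Then, with α₀ = maxₖ αₖ and β = α₀, D_{α,α₀}(p⁰_{X|G}, r¹_X,…,r^d_X | p_G) ≥ D_{α,α₀}(q⁰_{X|H}, r¹_X,…,r^d_X | q_H). -/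
/-!
For `p = α₀ > 0` and the positive weight `c x = ∏ₖ rᵏ(x)^{αₖ}`, the functional
`F v = ∑ₓ v(x)^p c(x)` is `p`-homogeneous on the nonnegative cone, convex for `p ≥ 1` and
concave for `p ≤ 1`. Normalising the summands to `F = 1` turns Jensen's inequality for `F`
into Minkowski's inequality for `F^{1/p}` (reversed when `p ≤ 1`). Since `q⁰(·|h)` is the
mixture of the `p⁰(·|g)` with the posterior weights `p_G(g) t(h|g) / q_H(h)`, which average
back to `p_G` under `q_H`, this compares the two sums inside the logarithm; the sign of
`α₀ / (α₀ - 1)` does the rest.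
-/

open Finset Real

theorem sum_mul_pos_of_sum_eq_one {ι : Type*} {t : Finset ι} {w a : ι → ℝ}
    (hw0 : ∀ i ∈ t, 0 ≤ w i) (hw1 : ∑ i ∈ t, w i = 1) (ha : ∀ i ∈ t, 0 < a i) :
    0 < ∑ i ∈ t, w i * a i := by
  obtain ⟨i, hi, hwi⟩ := exists_lt_of_sum_lt (s := t) (f := 0) (g := w) (by simp [hw1])
  exact sum_pos' (fun j hj => mul_nonneg (hw0 j hj) (ha j hj).le) ⟨i, hi, mul_pos hwi (ha i hi)⟩

section Homogeneous

variable {E ι : Type*} [AddCommGroup E] [Module ℝ E] {s : Set E} {F : E → ℝ} {p : ℝ}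
  {t : Finset ι} {w : ι → ℝ} {v : ι → E}

theorem exists_normalized_of_homogeneous (hp : 0 < p) (hsc : Convex ℝ s)
    (hs : ∀ a : ℝ, 0 < a → ∀ u ∈ s, a • u ∈ s)
    (hF : ∀ a : ℝ, 0 < a → ∀ u ∈ s, F (a • u) = a ^ p * F u)
    (hw0 : ∀ i ∈ t, 0 ≤ w i) (hw1 : ∑ i ∈ t, w i = 1)
    (hv : ∀ i ∈ t, v i ∈ s) (hFv : ∀ i ∈ t, 0 < F (v i)) :
    ∃ (μ : ι → ℝ) (u : ι → E), (∀ i ∈ t, 0 ≤ μ i) ∧ ∑ i ∈ t, μ i = 1 ∧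
      (∀ i ∈ t, u i ∈ s ∧ F (u i) = 1) ∧
      F (∑ i ∈ t, w i • v i) =
        (∑ i ∈ t, w i * F (v i) ^ (1 / p)) ^ p * F (∑ i ∈ t, μ i • u i) := by
  set N : ι → ℝ := fun i => F (v i) ^ (1 / p)
  set T := ∑ i ∈ t, w i * N i
  have hN : ∀ i ∈ t, 0 < N i := fun i hi => rpow_pos_of_pos (hFv i hi) _
  have hNp : ∀ i ∈ t, N i ^ p = F (v i) := fun i hi => by
    rw [← rpow_mul (hFv i hi).le, one_div_mul_cancel hp.ne', rpow_one]
  have hT : 0 < T := sum_mul_pos_of_sum_eq_one hw0 hw1 hN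
  have hμ1 : ∑ i ∈ t, w i * N i / T = 1 := by rw [← sum_div, div_self hT.ne']
  have hμs : ∑ i ∈ t, (w i * N i / T) • (N i)⁻¹ • v i ∈ s :=
    hsc.sum_mem (fun i hi => div_nonneg (mul_nonneg (hw0 i hi) (hN i hi).le) hT.le) hμ1
      fun i hi => hs _ (inv_pos.2 (hN i hi)) _ (hv i hi)
  refine ⟨fun i => w i * N i / T, fun i => (N i)⁻¹ • v i,
    fun i hi => div_nonneg (mul_nonneg (hw0 i hi) (hN i hi).le) hT.le, hμ1,
    fun i hi => ⟨hs _ (inv_pos.2 (hN i hi)) _ (hv i hi), ?_⟩, ?_⟩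
  · rw [hF _ (inv_pos.2 (hN i hi)) _ (hv i hi), inv_rpow (hN i hi).le, hNp i hi,
      inv_mul_cancel₀ (hFv i hi).ne']
  · rw [← hF T hT _ hμs, smul_sum]
    refine congrArg F (sum_congr rfl fun i hi => ?_)
    rw [smul_smul, smul_smul]
    congr 1
    field_simp [hT.ne', (hN i hi).ne']

theorem ConvexOn.rpow_one_div_map_sum_le_of_homogeneous (hf : ConvexOn ℝ s F) (hp : 0 < p)
    (hs : ∀ a : ℝ, 0 < a → ∀ u ∈ s, a • u ∈ s)
    (hF : ∀ a : ℝ, 0 < a → ∀ u ∈ s, F (a • u) = a ^ p * F u) (hF0 : ∀ u ∈ s, 0 ≤ F u)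
    (hw0 : ∀ i ∈ t, 0 ≤ w i) (hw1 : ∑ i ∈ t, w i = 1)
    (hv : ∀ i ∈ t, v i ∈ s) (hFv : ∀ i ∈ t, 0 < F (v i)) :
    F (∑ i ∈ t, w i • v i) ^ (1 / p) ≤ ∑ i ∈ t, w i * F (v i) ^ (1 / p) := by
  obtain ⟨μ, u, hμ0, hμ1, hu, heq⟩ :=
    exists_normalized_of_homogeneous hp hf.1 hs hF hw0 hw1 hv hFv
  have hT : 0 ≤ ∑ i ∈ t, w i * F (v i) ^ (1 / p) :=
    sum_nonneg fun i hi => mul_nonneg (hw0 i hi) (rpow_nonneg (hFv i hi).le _)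
  have hjensen : F (∑ i ∈ t, μ i • u i) ≤ 1 := by
    calc F (∑ i ∈ t, μ i • u i) ≤ ∑ i ∈ t, μ i • F (u i) :=
          hf.map_sum_le hμ0 hμ1 fun i hi => (hu i hi).1
      _ = ∑ i ∈ t, μ i := sum_congr rfl fun i hi => by rw [(hu i hi).2, smul_eq_mul, mul_one]
      _ = 1 := hμ1
  calc F (∑ i ∈ t, w i • v i) ^ (1 / p)
      ≤ ((∑ i ∈ t, w i * F (v i) ^ (1 / p)) ^ p) ^ (1 / p) := by
        refine rpow_le_rpow (hF0 _ (hf.1.sum_mem hw0 hw1 hv)) ?_ (by positivity)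
        rw [heq]
        exact mul_le_of_le_one_right (rpow_nonneg hT _) hjensen
    _ = ∑ i ∈ t, w i * F (v i) ^ (1 / p) := by
        rw [← rpow_mul hT, mul_one_div_cancel hp.ne', rpow_one]

theorem ConcaveOn.sum_le_rpow_one_div_map_sum_of_homogeneous (hf : ConcaveOn ℝ s F) (hp : 0 < p)
    (hs : ∀ a : ℝ, 0 < a → ∀ u ∈ s, a • u ∈ s)
    (hF : ∀ a : ℝ, 0 < a → ∀ u ∈ s, F (a • u) = a ^ p * F u)
    (hw0 : ∀ i ∈ t, 0 ≤ w i) (hw1 : ∑ i ∈ t, w i = 1)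
    (hv : ∀ i ∈ t, v i ∈ s) (hFv : ∀ i ∈ t, 0 < F (v i)) :
    ∑ i ∈ t, w i * F (v i) ^ (1 / p) ≤ F (∑ i ∈ t, w i • v i) ^ (1 / p) := by
  obtain ⟨μ, u, hμ0, hμ1, hu, heq⟩ :=
    exists_normalized_of_homogeneous hp hf.1 hs hF hw0 hw1 hv hFv
  have hT : 0 ≤ ∑ i ∈ t, w i * F (v i) ^ (1 / p) :=
    sum_nonneg fun i hi => mul_nonneg (hw0 i hi) (rpow_nonneg (hFv i hi).le _)
  have hjensen : 1 ≤ F (∑ i ∈ t, μ i • u i) := by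
    calc 1 = ∑ i ∈ t, μ i := hμ1.symm
      _ = ∑ i ∈ t, μ i • F (u i) :=
          sum_congr rfl fun i hi => by rw [(hu i hi).2, smul_eq_mul, mul_one]
      _ ≤ F (∑ i ∈ t, μ i • u i) := hf.le_map_sum hμ0 hμ1 fun i hi => (hu i hi).1
  calc ∑ i ∈ t, w i * F (v i) ^ (1 / p)
      = ((∑ i ∈ t, w i * F (v i) ^ (1 / p)) ^ p) ^ (1 / p) := by
        rw [← rpow_mul hT, mul_one_div_cancel hp.ne', rpow_one]
    _ ≤ F (∑ i ∈ t, w i • v i) ^ (1 / p) := by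
        refine rpow_le_rpow (rpow_nonneg hT _) ?_ (by positivity)
        rw [heq]
        exact le_mul_of_one_le_right (rpow_nonneg hT _) hjensen

end Homogeneous

section WeightedPowerSum

variable {X : Type*} [Fintype X] {p : ℝ} {c : X → ℝ}

theorem sum_smul_rpow_mul {a : ℝ} (ha : 0 ≤ a) {v : X → ℝ} (hv : 0 ≤ v) :
    ∑ x, (a • v) x ^ p * c x = a ^ p * ∑ x, v x ^ p * c x := by
  rw [mul_sum]
  exact sum_congr rfl fun x _ => by rw [Pi.smul_apply, smul_eq_mul, mul_rpow ha (hv x), mul_assoc]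

theorem convexOn_sum_rpow_mul (hp : 1 ≤ p) (hc : ∀ x, 0 ≤ c x) :
    ConvexOn ℝ (Set.Ici 0) fun v : X → ℝ => ∑ x, v x ^ p * c x := by
  refine ⟨convex_Ici 0, fun u hu v hv a b ha hb hab => ?_⟩
  simp only [smul_eq_mul, mul_sum, ← sum_add_distrib, Pi.add_apply, Pi.smul_apply]
  refine sum_le_sum fun x _ => ?_
  have := mul_le_mul_of_nonneg_right ((convexOn_rpow hp).2 (hu x) (hv x) ha hb hab) (hc x)
  simp only [smul_eq_mul] at this
  linarith

theorem concaveOn_sum_rpow_mul (hp₀ : 0 ≤ p) (hp₁ : p ≤ 1) (hc : ∀ x, 0 ≤ c x) :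
    ConcaveOn ℝ (Set.Ici 0) fun v : X → ℝ => ∑ x, v x ^ p * c x := by
  refine ⟨convex_Ici 0, fun u hu v hv a b ha hb hab => ?_⟩
  simp only [smul_eq_mul, mul_sum, ← sum_add_distrib, Pi.add_apply, Pi.smul_apply]
  refine sum_le_sum fun x _ => ?_
  have := mul_le_mul_of_nonneg_right
    ((Real.concaveOn_rpow hp₀ hp₁).2 (hu x) (hv x) ha hb hab) (hc x)
  simp only [smul_eq_mul] at this
  linarith

theorem sum_rpow_mul_pos [Nonempty X] (hc : ∀ x, 0 < c x) {v : X → ℝ} (hv : ∀ x, 0 < v x) :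
    0 < ∑ x, v x ^ p * c x :=
  sum_pos (fun x _ => mul_pos (rpow_pos_of_pos (hv x) p) (hc x)) univ_nonempty

variable [Nonempty X] {ι : Type*} {t : Finset ι} {w : ι → ℝ} {v : ι → X → ℝ}

theorem Lp_convexCombination_le (hp : 1 ≤ p) (hc : ∀ x, 0 < c x)
    (hw0 : ∀ i ∈ t, 0 ≤ w i) (hw1 : ∑ i ∈ t, w i = 1) (hv : ∀ i ∈ t, ∀ x, 0 < v i x) :
    (∑ x, (∑ i ∈ t, w i * v i x) ^ p * c x) ^ (1 / p) ≤
      ∑ i ∈ t, w i * (∑ x, v i x ^ p * c x) ^ (1 / p) := by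
  have := (convexOn_sum_rpow_mul hp fun x => (hc x).le).rpow_one_div_map_sum_le_of_homogeneous
    (by linarith) (fun a ha u hu => Set.mem_Ici.2 (smul_nonneg ha.le hu))
    (fun a ha u hu => sum_smul_rpow_mul ha.le hu)
    (fun u hu => sum_nonneg fun x _ => mul_nonneg (rpow_nonneg (hu x) _) (hc x).le)
    hw0 hw1 (fun i hi x => (hv i hi x).le) fun i hi => sum_rpow_mul_pos hc (hv i hi)
  simpa only [Finset.sum_apply, Pi.smul_apply, smul_eq_mul] using this

theorem le_Lp_convexCombination (hp₀ : 0 < p) (hp₁ : p ≤ 1) (hc : ∀ x, 0 < c x)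
    (hw0 : ∀ i ∈ t, 0 ≤ w i) (hw1 : ∑ i ∈ t, w i = 1) (hv : ∀ i ∈ t, ∀ x, 0 < v i x) :
    ∑ i ∈ t, w i * (∑ x, v i x ^ p * c x) ^ (1 / p) ≤
      (∑ x, (∑ i ∈ t, w i * v i x) ^ p * c x) ^ (1 / p) := by
  have hF := concaveOn_sum_rpow_mul (X := X) hp₀.le hp₁ fun x => (hc x).le
  have := hF.sum_le_rpow_one_div_map_sum_of_homogeneous hp₀
    (fun a ha u hu => Set.mem_Ici.2 (smul_nonneg ha.le hu))
    (fun a ha u hu => sum_smul_rpow_mul ha.le hu)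
    hw0 hw1 (fun i hi x => (hv i hi x).le) fun i hi => sum_rpow_mul_pos hc (hv i hi)
  simpa only [Finset.sum_apply, Pi.smul_apply, smul_eq_mul] using this

end WeightedPowerSum

theorem pos_of_sum_eq_one_of_forall_le {ι : Type*} [Fintype ι] {a : ι → ℝ} {m : ℝ}
    (hsum : ∑ i, a i = 1) (hle : ∀ i, a i ≤ m) : 0 < m := by
  have h := sum_le_sum fun i (_ : i ∈ univ) => hle i
  rw [hsum, sum_const, card_univ, nsmul_eq_mul] at h
  by_contra! hm
  linarith [mul_nonpos_of_nonneg_of_nonpos (Nat.cast_nonneg (Fintype.card ι)) hm]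

theorem div_sub_one_mul_log_le {a x y : ℝ} (ha : 0 < a) (ha1 : a ≠ 1) (hx : 0 < x) (hy : 0 < y)
    (hlt : a < 1 → y ≤ x) (hgt : 1 < a → x ≤ y) : a / (a - 1) * log x ≤ a / (a - 1) * log y := by
  rcases ha1.lt_or_gt with h | h
  · exact mul_le_mul_of_nonpos_left (log_le_log hy (hlt h))
      (div_nonpos_of_nonneg_of_nonpos ha.le (by linarith))
  · exact mul_le_mul_of_nonneg_left (log_le_log hx (hgt h)) (div_pos ha (by linarith)).le

section Posterior

variable {G H : Type*} [Fintype G] [Fintype H] (pG : G → ℝ)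

theorem sum_div_sum_mul_eq_one (t : G → ℝ) (hq : ∑ g, t g * pG g ≠ 0) :
    ∑ g, pG g / (∑ g', t g' * pG g') * t g = 1 := by
  rw [← div_self hq, sum_div]
  exact sum_congr rfl fun g _ => by ring

theorem sum_marginal_mul_sum_posterior_mul (t : H → G → ℝ) (f : G → ℝ)
    (hq : ∀ h, ∑ g, t h g * pG g ≠ 0) (ht : ∀ g, ∑ h, t h g = 1) :
    ∑ h, (∑ g', t h g' * pG g') * ∑ g, pG g / (∑ g', t h g' * pG g') * t h g * f g =
      ∑ g, pG g * f g := by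
  calc _ = ∑ h, ∑ g, t h g * (pG g * f g) :=
        sum_congr rfl fun h _ => by
          rw [mul_sum]
          exact sum_congr rfl fun g _ => by field_simp [hq h]
    _ = ∑ g, pG g * f g := by
        rw [sum_comm]
        exact sum_congr rfl fun g _ => by rw [← sum_mul, ht g, one_mul]

end Posterior

theorem conditional_multivariate_renyi_dpi_conditioning_general
    {X G H : Type*} [Fintype X] [Fintype G] [Fintype H]
    [Nonempty X] [Nonempty G] [Nonempty H] (d : ℕ)
    (pG : G → ℝ) (p0 : X → G → ℝ) (r : Fin d → X → ℝ)
    (α : Fin (d + 1) → ℝ)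
    (t : H → G → ℝ)
    (hpG_pos : ∀ g, 0 < pG g)
    (hp0_pos : ∀ x g, 0 < p0 x g)
    (hr_pos : ∀ k x, 0 < r k x)
    (ht_nonneg : ∀ h g, 0 ≤ t h g) (ht_sum : ∀ g, ∑ h, t h g = 1)
    (hqH_pos : ∀ h, 0 < ∑ g, t h g * pG g)
    (hα_sum : ∑ k, α k = 1)
    (hα0_max : ∀ k, α k ≤ α 0) (hα0_ne : α 0 ≠ 1) :
    (α 0 / (α 0 - 1)) * Real.log
        (∑ h, (∑ g, t h g * pG g) *
          (∑ x, ((∑ g, (pG g / (∑ g', t h g' * pG g')) * t h g * p0 x g) ^ (α 0) *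
            ∏ k : Fin d, (r k x) ^ (α k.succ))) ^ (1 / α 0)) ≤
      (α 0 / (α 0 - 1)) * Real.log
        (∑ g, pG g *
          (∑ x, ((p0 x g) ^ (α 0) * ∏ k : Fin d, (r k x) ^ (α k.succ))) ^ (1 / α 0)) := by
  have ha : 0 < α 0 := pos_of_sum_eq_one_of_forall_le hα_sum hα0_max
  have hc : ∀ x, 0 < ∏ k : Fin d, r k x ^ α k.succ :=
    fun x => prod_pos fun k _ => rpow_pos_of_pos (hr_pos k x) _
  have hw0 : ∀ h, ∀ g ∈ univ, 0 ≤ pG g / (∑ g', t h g' * pG g') * t h g :=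
    fun h g _ => mul_nonneg (div_nonneg (hpG_pos g).le (hqH_pos h).le) (ht_nonneg h g)
  have hw1 : ∀ h, ∑ g, pG g / (∑ g', t h g' * pG g') * t h g = 1 :=
    fun h => sum_div_sum_mul_eq_one pG (t h) (hqH_pos h).ne'
  have hp0 : ∀ g ∈ univ, ∀ x, 0 < p0 x g := fun g _ x => hp0_pos x g
  have haverage := sum_marginal_mul_sum_posterior_mul pG t
    (fun g => (∑ x, p0 x g ^ α 0 * ∏ k : Fin d, r k x ^ α k.succ) ^ (1 / α 0))
    (fun h => (hqH_pos h).ne') ht_sum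
  refine div_sub_one_mul_log_le ha hα0_ne ?_ ?_ (fun hlt => ?_) (fun hgt => ?_)
  · refine sum_pos (fun h _ => mul_pos (hqH_pos h) (rpow_pos_of_pos (sum_rpow_mul_pos hc
      fun x => sum_mul_pos_of_sum_eq_one (hw0 h) (hw1 h) fun g hg => hp0 g hg x) _)) univ_nonempty
  · exact sum_pos (fun g _ => mul_pos (hpG_pos g)
      (rpow_pos_of_pos (sum_rpow_mul_pos hc (hp0_pos · g)) _)) univ_nonempty
  · rw [← haverage]
    exact sum_le_sum fun h _ => mul_le_mul_of_nonneg_left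
      (le_Lp_convexCombination ha hlt.le hc (hw0 h) (hw1 h) hp0) (hqH_pos h).le
  · rw [← haverage]
    exact sum_le_sum fun h _ => mul_le_mul_of_nonneg_left
      (Lp_convexCombination_le hgt.le hc (hw0 h) (hw1 h) hp0) (hqH_pos h).le

/-- Data processing inequality for the conditional multivariate Rényi
divergence with respect to the conditioning system (Proposition `l:l2`):
when the PMFs `r k` are independent of `G`, `α 0` is the maximal order and
`β = α 0`, postprocessing the side information `G ↦ H` via a stochastic
operator `t` (using its pseudo-inverse to define `q0`) does not increase
the divergence. -/
theorem conditional_multivariate_renyi_dpi_conditioning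
    {X G H : Type*} [Fintype X] [Fintype G] [Fintype H]
    [Nonempty X] [Nonempty G] [Nonempty H] (d : ℕ)
    (pG : G → ℝ) (p0 : X → G → ℝ) (r : Fin d → X → ℝ)
    (α : Fin (d + 1) → ℝ)
    (t : H → G → ℝ)
    (hpG_pos : ∀ g, 0 < pG g) (hpG_sum : ∑ g, pG g = 1)
    (hp0_pos : ∀ x g, 0 < p0 x g) (hp0_sum : ∀ g, ∑ x, p0 x g = 1)
    (hr_pos : ∀ k x, 0 < r k x) (hr_sum : ∀ k, ∑ x, r k x = 1)
    (ht_nonneg : ∀ h g, 0 ≤ t h g) (ht_sum : ∀ g, ∑ h, t h g = 1)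
    (hqH_pos : ∀ h, 0 < ∑ g, t h g * pG g)
    (hα_sum : ∑ k, α k = 1)
    (hα_cond : (∀ k, 0 ≤ α k) ∨
      (1 < α 0 ∧ ∀ k : Fin d, α k.succ ≤ 0))
    (hα0_max : ∀ k, α k ≤ α 0) (hα0_ne : α 0 ≠ 1) :
    (α 0 / (α 0 - 1)) * Real.log
        (∑ h, (∑ g, t h g * pG g) *
          (∑ x, ((∑ g, (pG g / (∑ g', t h g' * pG g')) * t h g * p0 x g) ^ (α 0) *
            ∏ k : Fin d, (r k x) ^ (α k.succ))) ^ (1 / α 0)) ≤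
      (α 0 / (α 0 - 1)) * Real.log
        (∑ g, pG g *
          (∑ x, ((p0 x g) ^ (α 0) * ∏ k : Fin d, (r k x) ^ (α k.succ))) ^ (1 / α 0)) :=
  conditional_multivariate_renyi_dpi_conditioning_general d pG p0 r α t hpG_pos hp0_pos hr_pos
    ht_nonneg ht_sum hqH_pos hα_sum hα0_max hα0_ne
end

section
/- Conditioning increases the multivariate Rényi divergence: D_{α,α₀}(p⁰_{X|G}, r¹_X,…,r^d_X | p_G) ≥ D_α(p⁰_X, r¹_X,…,r^d_X), where p⁰_X(x) = ∑_g p_G(g) p⁰_{X|G}(x|g) is the marginal. -/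
/-!
Put `q = α₀`, `w(x) = ∏ₖ rᵏ(x)^{αₖ}`, `v_g(x) = p_G(g) p⁰(x|g) w(x)^{1/q}` and
`‖v‖_q = (∑ₓ v(x)^q)^{1/q}`. The unconditional sum is `‖∑_g v_g‖_q^q` and the conditional one
is `∑_g ‖v_g‖_q`; since `q/(q-1)` has the sign of `q - 1`, the claim is Minkowski's inequality
for `q > 1` and the reverse Minkowski inequality for `0 < q < 1`. Here `q > 0` because `α₀` is
the largest of weights summing to `1`.
-/

open Finset Real

theorem pos_of_sum_eq_one_of_forall_le_s6 {ι : Type*} [Fintype ι] {α : ι → ℝ}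
    (hα : ∑ k, α k = 1) {i : ι} (hi : ∀ k, α k ≤ α i) : 0 < α i := by
  by_contra! h
  have : ∑ k, α k ≤ 0 := sum_nonpos fun k _ => (hi k).trans h
  linarith

section PNorm

variable {ι κ : Type*} [Fintype ι] {p : ℝ}

/-- The `ℓ^p` (quasi-)norm, without absolute values: meant for nonnegative vectors. -/
noncomputable def pNorm (p : ℝ) (v : ι → ℝ) : ℝ := (∑ i, v i ^ p) ^ (1 / p)

theorem pNorm_pos [Nonempty ι] {v : ι → ℝ} (hv : ∀ i, 0 < v i) : 0 < pNorm p v :=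
  rpow_pos_of_pos (sum_pos (fun i _ => rpow_pos_of_pos (hv i) p) univ_nonempty) _

theorem pNorm_const_mul {c : ℝ} (hc : 0 ≤ c) {v : ι → ℝ} (hv : ∀ i, 0 ≤ v i)
    (hp : p ≠ 0) :
    pNorm p (fun i => c * v i) = c * pNorm p v := by
  simp only [pNorm, mul_rpow hc (hv _), ← mul_sum]
  rw [mul_rpow (rpow_nonneg hc p) (sum_nonneg fun i _ => rpow_nonneg (hv i) p),
    ← rpow_mul hc, mul_one_div_cancel hp, rpow_one]

theorem pNorm_sum_le_sum_pNorm (s : Finset κ) {a : κ → ι → ℝ} (ha : ∀ g i, 0 ≤ a g i)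
    (hp : 1 ≤ p) : pNorm p (∑ g ∈ s, a g) ≤ ∑ g ∈ s, pNorm p (a g) := by
  classical
  induction s using Finset.induction_on with
  | empty =>
    have hp0 : 0 < p := zero_lt_one.trans_le hp
    simp [pNorm, zero_rpow hp0.ne', zero_rpow (inv_pos.2 hp0).ne']
  | insert k s hk ih =>
    rw [sum_insert hk, sum_insert hk]
    calc pNorm p (a k + ∑ g ∈ s, a g)
        ≤ pNorm p (a k) + pNorm p (∑ g ∈ s, a g) :=
          Lp_add_le_of_nonneg univ hp (fun i _ => ha k i) fun i _ => by
            simpa only [Finset.sum_apply] using sum_nonneg fun g _ => ha g i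
      _ ≤ pNorm p (a k) + ∑ g ∈ s, pNorm p (a g) := by gcongr

/-- For `0 < p < 1` the concave function `pNorm p` lies below its tangent hyperplane at `S`. -/
theorem pNorm_le_sum_mul_rpow_sub_one (hp0 : 0 < p) (hp1 : p < 1) {a S : ι → ℝ}
    (ha : ∀ i, 0 ≤ a i) (hS : ∀ i, 0 < S i) :
    pNorm p a ≤ (∑ i, a i * S i ^ (p - 1)) * (∑ i, S i ^ p) ^ ((1 - p) / p) := by
  have hpq : HolderConjugate (1 / p) (1 / (1 - p)) :=
    ⟨by simp, one_div_pos.2 hp0, one_div_pos.2 (sub_pos.2 hp1)⟩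
  have hb : ∀ i, 0 ≤ a i * S i ^ (p - 1) := fun i =>
    mul_nonneg (ha i) (rpow_nonneg (hS i).le _)
  -- Hölder with exponents `1/p` and `1/(1-p)`, after writing `a^p = (a S^(p-1))^p (S^p)^(1-p)`
  have holder := inner_le_Lp_mul_Lq_of_nonneg univ hpq
    (f := fun i => (a i * S i ^ (p - 1)) ^ p) (g := fun i => S i ^ (p * (1 - p)))
    (fun i _ => rpow_nonneg (hb i) _) (fun i _ => rpow_nonneg (hS i).le _)
  have split : ∀ i, (a i * S i ^ (p - 1)) ^ p * S i ^ (p * (1 - p)) = a i ^ p := fun i => by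
    rw [mul_rpow (ha i) (rpow_nonneg (hS i).le _), mul_assoc, ← rpow_mul (hS i).le,
      ← rpow_add (hS i), show (p - 1) * p + p * (1 - p) = 0 by ring, rpow_zero, mul_one]
  simp only [split, ← rpow_mul (hb _), ← rpow_mul (hS _).le, mul_one_div_cancel hp0.ne',
    mul_assoc, mul_one_div_cancel (sub_pos.2 hp1).ne', rpow_one, mul_one, one_div_one_div]
    at holder
  calc pNorm p a ≤ ((∑ i, a i * S i ^ (p - 1)) ^ p * (∑ i, S i ^ p) ^ (1 - p)) ^ (1 / p) :=
        rpow_le_rpow (sum_nonneg fun i _ => rpow_nonneg (ha i) _) holder (one_div_pos.2 hp0).le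
    _ = _ := by
      rw [mul_rpow (rpow_nonneg (sum_nonneg fun i _ => hb i) _)
          (rpow_nonneg (sum_nonneg fun i _ => rpow_nonneg (hS i).le _) _),
        ← rpow_mul (sum_nonneg fun i _ => hb i),
        ← rpow_mul (sum_nonneg fun i _ => rpow_nonneg (hS i).le _),
        mul_one_div_cancel hp0.ne', rpow_one, mul_one_div]

theorem sum_pNorm_le_pNorm_sum (s : Finset κ) {a : κ → ι → ℝ} (ha : ∀ g i, 0 ≤ a g i)
    (hs : ∀ i, 0 < ∑ g ∈ s, a g i) (hp0 : 0 < p) (hp1 : p < 1) :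
    ∑ g ∈ s, pNorm p (a g) ≤ pNorm p (∑ g ∈ s, a g) := by
  set S := ∑ g ∈ s, a g
  have hS : ∀ i, S i = ∑ g ∈ s, a g i := fun i => Finset.sum_apply i s a
  have hSpos : ∀ i, 0 < S i := fun i => hS i ▸ hs i
  set T := ∑ i, S i ^ p
  calc ∑ g ∈ s, pNorm p (a g)
      ≤ ∑ g ∈ s, (∑ i, a g i * S i ^ (p - 1)) * T ^ ((1 - p) / p) :=
        sum_le_sum fun g _ => pNorm_le_sum_mul_rpow_sub_one hp0 hp1 (ha g) hSpos
    _ = (∑ i, S i * S i ^ (p - 1)) * T ^ ((1 - p) / p) := by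
        rw [← sum_mul, sum_comm]
        simp only [← sum_mul, ← hS]
    _ = T * T ^ ((1 - p) / p) := by
        congr 1
        refine sum_congr rfl fun i _ => ?_
        rw [← rpow_one_add' (hSpos i).le (by linarith), add_sub_cancel]
    _ = pNorm p S := by
      rw [pNorm, ← rpow_one_add' (sum_nonneg fun i _ => rpow_nonneg (hSpos i).le _)
        (by positivity)]
      congr 1
      field_simp
      ring

theorem one_div_sub_one_mul_log_sum_rpow_le [Fintype κ] [Nonempty ι] [Nonempty κ]
    {v : κ → ι → ℝ} (hv : ∀ g i, 0 < v g i) (hp0 : 0 < p) (hp1 : p ≠ 1) :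
    1 / (p - 1) * log (∑ i, (∑ g, v g i) ^ p) ≤ p / (p - 1) * log (∑ g, pNorm p (v g)) := by
  have hsum_pos : ∀ i, 0 < ∑ g, v g i := fun i => sum_pos (fun g _ => hv g i) univ_nonempty
  have hlog : 1 / (p - 1) * log (∑ i, (∑ g, v g i) ^ p)
      = p / (p - 1) * log (pNorm p (∑ g, v g)) := by
    simp only [pNorm, Finset.sum_apply]
    rw [log_rpow (sum_pos (fun i _ => rpow_pos_of_pos (hsum_pos i) p) univ_nonempty)]
    field_simp
  rw [hlog]
  rcases hp1.lt_or_gt with hp1 | hp1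
  · refine mul_le_mul_of_nonpos_left (log_le_log ?_ ?_) (div_nonpos_of_nonneg_of_nonpos hp0.le
      (by linarith))
    · exact sum_pos (fun g _ => pNorm_pos (hv g)) univ_nonempty
    · exact sum_pNorm_le_pNorm_sum univ (fun g i => (hv g i).le) hsum_pos hp0 hp1
  · refine mul_le_mul_of_nonneg_left (log_le_log ?_ ?_) (div_nonneg hp0.le (by linarith))
    · exact pNorm_pos fun i => by simpa only [Finset.sum_apply] using hsum_pos i
    · exact pNorm_sum_le_sum_pNorm univ (fun g i => (hv g i).le) hp1.le

end PNorm

theorem conditional_ge_unconditional_multivariate_renyi_general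
    {X G : Type*} [Fintype X] [Fintype G] [Nonempty X] [Nonempty G] (d : ℕ)
    (pG : G → ℝ) (p0 : X → G → ℝ) (r : Fin d → X → ℝ)
    (α : Fin (d + 1) → ℝ)
    (hpG_pos : ∀ g, 0 < pG g)
    (hp0_pos : ∀ x g, 0 < p0 x g)
    (hr_pos : ∀ k x, 0 < r k x)
    (hα_sum : ∑ k, α k = 1)
    (hα0_max : ∀ k, α k ≤ α 0) (hα0_ne : α 0 ≠ 1) :
    (1 / (α 0 - 1)) * Real.log
        (∑ x, ((∑ g, pG g * p0 x g) ^ (α 0) *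
          ∏ k : Fin d, (r k x) ^ (α k.succ))) ≤
      (α 0 / (α 0 - 1)) * Real.log
        (∑ g, pG g *
          (∑ x, ((p0 x g) ^ (α 0) * ∏ k : Fin d, (r k x) ^ (α k.succ))) ^ (1 / α 0)) := by
  have hq : 0 < α 0 := pos_of_sum_eq_one_of_forall_le_s6 hα_sum hα0_max
  obtain ⟨w, hw_def⟩ : ∃ w : X → ℝ, ∀ x, ∏ k : Fin d, r k x ^ α k.succ = w x :=
    ⟨_, fun _ => rfl⟩
  have hw : ∀ x, 0 < w x := fun x =>
    hw_def x ▸ prod_pos fun k _ => rpow_pos_of_pos (hr_pos k x) _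
  set v : G → X → ℝ := fun g x => pG g * (p0 x g * w x ^ (α 0)⁻¹)
  have hv : ∀ g x, 0 < v g x := fun g x =>
    mul_pos (hpG_pos g) (mul_pos (hp0_pos x g) (rpow_pos_of_pos (hw x) _))
  have hlhs : ∀ x, (∑ g, pG g * p0 x g) ^ α 0 * w x = (∑ g, v g x) ^ α 0 := fun x => by
    simp only [v, ← mul_assoc, ← sum_mul]
    rw [mul_rpow (sum_nonneg fun g _ => (mul_pos (hpG_pos g) (hp0_pos x g)).le)
      (rpow_nonneg (hw x).le _), rpow_inv_rpow (hw x).le hq.ne']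
  have hrhs : ∀ g, pG g * (∑ x, p0 x g ^ α 0 * w x) ^ (1 / α 0) = pNorm (α 0) (v g) := by
    intro g
    rw [pNorm_const_mul (hpG_pos g).le
      (fun x => (mul_pos (hp0_pos x g) (rpow_pos_of_pos (hw x) _)).le) hq.ne']
    simp only [pNorm, mul_rpow (hp0_pos _ g).le (rpow_nonneg (hw _).le _),
      rpow_inv_rpow (hw _).le hq.ne']
  simp only [hw_def, hlhs, hrhs]
  exact one_div_sub_one_mul_log_sum_rpow_le hv hq hα0_ne

/-- Conditioning increases the multivariate Rényi divergence (Corollary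
`c:c1`): the conditional divergence of `(p0_{X|G}, r¹, …, r^d)` given `p_G`
dominates the unconditional divergence with the marginal
`p0_X(x) = ∑_g p_G(g) p0(x|g)`. -/
theorem conditional_ge_unconditional_multivariate_renyi
    {X G : Type*} [Fintype X] [Fintype G] [Nonempty X] [Nonempty G] (d : ℕ)
    (pG : G → ℝ) (p0 : X → G → ℝ) (r : Fin d → X → ℝ)
    (α : Fin (d + 1) → ℝ)
    (hpG_pos : ∀ g, 0 < pG g) (hpG_sum : ∑ g, pG g = 1)
    (hp0_pos : ∀ x g, 0 < p0 x g) (hp0_sum : ∀ g, ∑ x, p0 x g = 1)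
    (hr_pos : ∀ k x, 0 < r k x) (hr_sum : ∀ k, ∑ x, r k x = 1)
    (hα_sum : ∑ k, α k = 1)
    (hα_cond : (∀ k, 0 ≤ α k) ∨
      (1 < α 0 ∧ ∀ k : Fin d, α k.succ ≤ 0))
    (hα0_max : ∀ k, α k ≤ α 0) (hα0_ne : α 0 ≠ 1) :
    (1 / (α 0 - 1)) * Real.log
        (∑ x, ((∑ g, pG g * p0 x g) ^ (α 0) *
          ∏ k : Fin d, (r k x) ^ (α k.succ))) ≤
      (α 0 / (α 0 - 1)) * Real.log
        (∑ g, pG g *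
          (∑ x, ((p0 x g) ^ (α 0) * ∏ k : Fin d, (r k x) ^ (α k.succ))) ^ (1 / α 0)) :=
  conditional_ge_unconditional_multivariate_renyi_general d pG p0 r α hpG_pos hp0_pos hr_pos hα_sum
    hα0_max hα0_ne
end

section
/- Optimal betting for single-lottery betting with fair odds: for a full-support PMF p on finite X, fair odds o (i.e., ∑ₓ 1/o(x) = 1), and risk-aversion R > 1, max over all PMFs b of log w^ICE(p, o, b, u_R) equals the bivariate Rényi divergence D_{1/R}(p ‖ o⁻¹) of order α = 1/R, i.e., max_b (1/(1−R)) log ∑ₓ p(x)(b(x)o(x))^{1−R} = (1/(α−1)) log ∑ₓ p(x)^α (1/o(x))^{1−α} with α = 1/R. -/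
/-!
Write `c x = p x ^ (1/R) * (1/o x) ^ (1 - 1/R)`. For every strategy `b` the expected utility sum
`∑ p x * (b x * o x) ^ (1 - R)` equals `∑ b x * (c x / b x) ^ R`, which by Jensen's inequality for
the convex function `t ↦ t ^ R` is at least `(∑ c x) ^ R`, with equality when `c / b` is constant,
i.e. for `b ∝ c`. Since `1 - R < 0`, minimising this sum maximises the log certainty equivalent,
and `(1/(1-R)) * log ((∑ c x) ^ R)` is the Rényi divergence of order `1/R`.
-/

open Finset Real

lemma Real.mul_div_rpow_eq_mul_mul_rpow_one_sub {p o b R : ℝ} (hp : 0 < p) (ho : 0 < o)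
    (hb : 0 < b) (hR : R ≠ 0) :
    b * (p ^ (1 / R) * (1 / o) ^ (1 - 1 / R) / b) ^ R = p * (b * o) ^ (1 - R) := by
  have hpow : (p ^ (1 / R) * (1 / o) ^ (1 - 1 / R)) ^ R = p * o ^ (1 - R) := by
    rw [mul_rpow (by positivity) (by positivity), ← rpow_mul hp.le, ← rpow_mul (by positivity),
      one_div_mul_cancel hR, rpow_one, one_div, inv_rpow ho.le, ← rpow_neg ho.le]
    congr 2
    field_simp
    ring
  have hb_pow : b * b⁻¹ ^ R = b ^ (1 - R) := by
    rw [inv_rpow hb.le, ← rpow_neg hb.le, sub_eq_add_neg, rpow_add hb, rpow_one]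
  rw [div_eq_mul_inv, mul_rpow (by positivity) (by positivity), hpow, mul_rpow hb.le ho.le]
  linear_combination (p * o ^ (1 - R)) * hb_pow

theorem isLeast_sum_mul_div_rpow {X : Type*} [Fintype X] [Nonempty X] {c : X → ℝ}
    (hc : ∀ x, 0 < c x) {R : ℝ} (hR : 1 ≤ R) :
    IsLeast {s | ∃ b : X → ℝ, (∀ x, 0 < b x) ∧ ∑ x, b x = 1 ∧ s = ∑ x, b x * (c x / b x) ^ R}
      ((∑ x, c x) ^ R) := by
  have hC : 0 < ∑ x, c x := sum_pos (fun x _ => hc x) univ_nonempty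
  constructor
  · refine ⟨fun x => c x / ∑ y, c y, fun x => div_pos (hc x) hC, by rw [← sum_div, div_self hC.ne'],
      ?_⟩
    simp only [div_div_cancel₀ (hc _).ne', ← sum_mul, ← sum_div, div_self hC.ne', one_mul]
  · rintro s ⟨b, hb, hb_sum, rfl⟩
    have hmean : ∑ x, b x * (c x / b x) = ∑ x, c x :=
      sum_congr rfl fun x _ => mul_div_cancel₀ _ (hb x).ne'
    rw [← hmean]
    exact rpow_arith_mean_le_arith_mean_rpow _ _ _ (fun x _ => (hb x).le) hb_sum
      (fun x _ => (div_pos (hc x) (hb x)).le) hR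

lemma IsLeast.isGreatest_image_mul_log {S : Set ℝ} {a k : ℝ} (h : IsLeast S a) (ha : 0 < a)
    (hk : k ≤ 0) : IsGreatest ((fun s => k * log s) '' S) (k * log a) :=
  AntitoneOn.map_isLeast (t := S)
    (fun _ hs _ _ hst => mul_le_mul_of_nonpos_left (log_le_log (ha.trans_le (h.2 hs)) hst) hk) h

theorem single_lottery_optimal_betting_fair_odds_general
    {X : Type*} [Fintype X] [Nonempty X]
    (p o : X → ℝ) (R : ℝ)
    (hp_pos : ∀ x, 0 < p x)
    (ho_pos : ∀ x, 0 < o x)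
    (hR : 1 < R) :
    IsGreatest
      {v : ℝ | ∃ b : X → ℝ, (∀ x, 0 < b x) ∧ (∑ x, b x = 1) ∧
        v = (1 / (1 - R)) * Real.log (∑ x, p x * (b x * o x) ^ (1 - R))}
      ((1 / (1 / R - 1)) *
        Real.log (∑ x, (p x) ^ (1 / R) * (1 / o x) ^ (1 - 1 / R))) := by
  set c : X → ℝ := fun x => p x ^ (1 / R) * (1 / o x) ^ (1 - 1 / R)
  have hc : ∀ x, 0 < c x := fun x => by have := ho_pos x; have := hp_pos x; positivity
  have hC : 0 < ∑ x, c x := sum_pos (fun x _ => hc x) univ_nonempty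
  have hR0 : R ≠ 0 := by positivity
  have hleast := isLeast_sum_mul_div_rpow hc hR.le
  have hsum : ∀ b : X → ℝ, (∀ x, 0 < b x) →
      ∑ x, p x * (b x * o x) ^ (1 - R) = ∑ x, b x * (c x / b x) ^ R := fun b hb =>
    sum_congr rfl fun x _ =>
      (mul_div_rpow_eq_mul_mul_rpow_one_sub (hp_pos x) (ho_pos x) (hb x) hR0).symm
  have hset : {v : ℝ | ∃ b : X → ℝ, (∀ x, 0 < b x) ∧ (∑ x, b x = 1) ∧
        v = (1 / (1 - R)) * log (∑ x, p x * (b x * o x) ^ (1 - R))} =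
      (fun s => 1 / (1 - R) * log s) ''
        {s | ∃ b : X → ℝ, (∀ x, 0 < b x) ∧ ∑ x, b x = 1 ∧ s = ∑ x, b x * (c x / b x) ^ R} := by
    ext v
    constructor
    · rintro ⟨b, hb, hb_sum, rfl⟩
      exact ⟨_, ⟨b, hb, hb_sum, rfl⟩, by rw [hsum b hb]⟩
    · rintro ⟨s, ⟨b, hb, hb_sum, rfl⟩, rfl⟩
      exact ⟨b, hb, hb_sum, by rw [hsum b hb]⟩
  have hvalue : 1 / (1 / R - 1) * log (∑ x, c x) = 1 / (1 - R) * log ((∑ x, c x) ^ R) := by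
    rw [log_rpow hC]
    have : 1 - R ≠ 0 := by linarith
    field_simp
  rw [hset, hvalue]
  exact hleast.isGreatest_image_mul_log (rpow_pos_of_pos hC R) (by rw [one_div_nonpos]; linarith)

/-- Optimal betting for a single-lottery betting game with fair odds:
for `R > 1`, the maximum of the log isoelastic certainty equivalent over all
full-support betting strategies `b` equals the bivariate Rényi divergence of
order `α = 1/R` between `p` and the inverse odds. -/
theorem single_lottery_optimal_betting_fair_odds
    {X : Type*} [Fintype X] [Nonempty X]
    (p o : X → ℝ) (R : ℝ)
    (hp_pos : ∀ x, 0 < p x) (hp_sum : ∑ x, p x = 1)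
    (ho_pos : ∀ x, 0 < o x) (ho_fair : ∑ x, 1 / o x = 1)
    (hR : 1 < R) :
    IsGreatest
      {v : ℝ | ∃ b : X → ℝ, (∀ x, 0 < b x) ∧ (∑ x, b x = 1) ∧
        v = (1 / (1 - R)) * Real.log (∑ x, p x * (b x * o x) ^ (1 - R))}
      ((1 / (1 / R - 1)) *
        Real.log (∑ x, (p x) ^ (1 / R) * (1 / o x) ^ (1 - 1 / R))) :=
  single_lottery_optimal_betting_fair_odds_general p o R hp_pos ho_pos hR
end

section
/- Multi-lottery optimal-bet formula (Corollary: unconditional case with fair odds): for a full-support PMF p⁰ on finite X, d fair odds functions o¹,…,o^d (each with ∑ₓ 1/oᵏ(x) = 1), and risk-aversion vector R = (R₁,…,R_d) with all Rₖ ≥ 1 (not all equal to 1), setting α₀ = (1 + ∑ₖ(Rₖ−1))⁻¹ and αₖ = (Rₖ−1)α₀, the supremum over d-tuples of PMFs (b¹,…,b^d) of ( ∑ₖ(1−Rₖ) )⁻¹ · log ∑ₓ p⁰(x) ∏ₖ (bᵏ(x)oᵏ(x))^{1−Rₖ} equals the multivariate Rényi divergence D_α(p⁰, (o¹)⁻¹,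 …, (o^d)⁻¹). -/
/-!
Write `u x = p⁰(x) ∏ₖ oᵏ(x)^(1-Rₖ)` and `T = ∑ₓ u(x)^α₀`, the argument of the logarithm in
`D_α(p⁰, 1/o¹, …, 1/oᵈ)`. For any bets, `u = a ∏ₖ (bᵏ)^(Rₖ-1)` with
`a(x) = p⁰(x) ∏ₖ (bᵏ(x) oᵏ(x))^(1-Rₖ)`, and the exponents `α₀` and `αₖ = (Rₖ-1) α₀` sum to one,
so Hölder's inequality gives `T ≤ (∑ₓ a)^α₀ · ∏ₖ (∑ₓ bᵏ)^αₖ = (∑ₓ a)^α₀`. As `∑ₖ (1-Rₖ) < 0`,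
the objective `(∑ₖ (1-Rₖ))⁻¹ log ∑ₓ a` is therefore at most `(∑ₖ (1-Rₖ))⁻¹ log T^(1/α₀)`, which
is `D_α`. Equality holds when every `bᵏ` is proportional to `u^α₀`.
-/

open Finset Real MeasureTheory

theorem sum_rpow_mul_prod_rpow_le {X ι : Type*} [Fintype X] (s : Finset ι)
    {g : X → ℝ} {f : ι → X → ℝ} (hg : ∀ x, 0 ≤ g x) (hf : ∀ i ∈ s, ∀ x, 0 ≤ f i x)
    (q : ℝ) {p : ι → ℝ} (hpq : q + ∑ i ∈ s, p i = 1) (hq : 0 ≤ q) (hp : ∀ i ∈ s, 0 ≤ p i) :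
    ∑ x, g x ^ q * ∏ i ∈ s, f i x ^ p i ≤ (∑ x, g x) ^ q * ∏ i ∈ s, (∑ x, f i x) ^ p i := by
  have ofReal_mul_prod : ∀ {G : ℝ} {F : ι → ℝ}, 0 ≤ G → (∀ i ∈ s, 0 ≤ F i) →
      ENNReal.ofReal (G ^ q * ∏ i ∈ s, F i ^ p i) =
        ENNReal.ofReal G ^ q * ∏ i ∈ s, ENNReal.ofReal (F i) ^ p i := fun hG hF => by
    rw [ENNReal.ofReal_mul (rpow_nonneg hG q), ← ENNReal.ofReal_rpow_of_nonneg hG hq,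
      ENNReal.ofReal_prod_of_nonneg fun i hi => rpow_nonneg (hF i hi) _]
    exact congrArg _ <| prod_congr rfl fun i hi =>
      (ENNReal.ofReal_rpow_of_nonneg (hF i hi) (hp i hi)).symm
  have hf_sum : ∀ i ∈ s, 0 ≤ ∑ x, f i x := fun i hi => sum_nonneg fun x _ => hf i hi x
  -- Hölder for the counting measure on `X`
  let : MeasurableSpace X := ⊤
  have h := ENNReal.lintegral_mul_prod_norm_pow_le (μ := Measure.count) s
    (g := fun x => ENNReal.ofReal (g x)) (f := fun i x => ENNReal.ofReal (f i x))
    measurable_from_top.aemeasurable (fun _ _ => measurable_from_top.aemeasurable) q hpq hq hp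
  simp only [lintegral_fintype, Measure.count_singleton, mul_one] at h
  rw [← ENNReal.ofReal_le_ofReal_iff (mul_nonneg (rpow_nonneg (sum_nonneg fun x _ => hg x) q)
      (prod_nonneg fun i hi => rpow_nonneg (hf_sum i hi) _)),
    ENNReal.ofReal_sum_of_nonneg fun x _ =>
      mul_nonneg (rpow_nonneg (hg x) q) (prod_nonneg fun i hi => rpow_nonneg (hf i hi x) _),
    ofReal_mul_prod (sum_nonneg fun x _ => hg x) hf_sum,
    ENNReal.ofReal_sum_of_nonneg fun x _ => hg x]
  calc _ = _ := sum_congr rfl fun x _ => ofReal_mul_prod (hg x) fun i hi => hf i hi x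
    _ ≤ _ := h
    _ = _ := congrArg _ <| prod_congr rfl fun i hi => by
      rw [ENNReal.ofReal_sum_of_nonneg fun x _ => hf i hi x]

noncomputable section

variable {X ι : Type*} [Fintype ι]

/-- The order `α₀` of the Rényi divergence; the other orders are `αₖ = (Rₖ - 1) α₀`. -/
def renyiOrder (R : ι → ℝ) : ℝ := (1 + ∑ k, (R k - 1))⁻¹

lemma mul_prod_rpow_pos {p0 : X → ℝ} {o : ι → X → ℝ} {R : ι → ℝ} (hp0 : ∀ x, 0 < p0 x)
    (ho : ∀ k x, 0 < o k x) (x : X) : 0 < p0 x * ∏ k, o k x ^ (1 - R k) :=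
  mul_pos (hp0 x) (prod_pos fun k _ => rpow_pos_of_pos (ho k x) _)

variable [Fintype X]

def expectedPowerWealth (p0 : X → ℝ) (o b : ι → X → ℝ) (R : ι → ℝ) : ℝ :=
  ∑ x, p0 x * ∏ k, (b k x * o k x) ^ (1 - R k)

def renyiSum (p0 : X → ℝ) (o : ι → X → ℝ) (R : ι → ℝ) : ℝ :=
  ∑ x, p0 x ^ renyiOrder R * ∏ k, (1 / o k x) ^ ((R k - 1) * renyiOrder R)

def optimalBet (p0 : X → ℝ) (o : ι → X → ℝ) (R : ι → ℝ) (x : X) : ℝ :=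
  (p0 x * ∏ k, o k x ^ (1 - R k)) ^ renyiOrder R / renyiSum p0 o R

variable {p0 : X → ℝ} {o : ι → X → ℝ} {R : ι → ℝ}

lemma renyiSum_eq_sum_rpow (hp0 : ∀ x, 0 < p0 x) (ho : ∀ k x, 0 < o k x) :
    renyiSum p0 o R = ∑ x, (p0 x * ∏ k, o k x ^ (1 - R k)) ^ renyiOrder R := by
  refine sum_congr rfl fun x _ => ?_
  rw [mul_rpow (hp0 x).le (prod_nonneg fun k _ => (rpow_pos_of_pos (ho k x) _).le),
    ← finsetProd_rpow _ _ fun k _ => (rpow_pos_of_pos (ho k x) _).le]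
  refine congrArg _ (prod_congr rfl fun k _ => ?_)
  rw [one_div, inv_rpow (ho k x).le, ← rpow_neg (ho k x).le, ← rpow_mul (ho k x).le]
  ring_nf

lemma renyiSum_pos [Nonempty X] (hp0 : ∀ x, 0 < p0 x) (ho : ∀ k x, 0 < o k x) :
    0 < renyiSum p0 o R := by
  rw [renyiSum_eq_sum_rpow hp0 ho]
  exact sum_pos (fun x _ => rpow_pos_of_pos (mul_prod_rpow_pos hp0 ho x) _) univ_nonempty

lemma optimalBet_pos [Nonempty X] (hp0 : ∀ x, 0 < p0 x) (ho : ∀ k x, 0 < o k x) (x : X) :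
    0 < optimalBet p0 o R x :=
  div_pos (rpow_pos_of_pos (mul_prod_rpow_pos hp0 ho x) _) (renyiSum_pos hp0 ho)

lemma sum_optimalBet [Nonempty X] (hp0 : ∀ x, 0 < p0 x) (ho : ∀ k x, 0 < o k x) :
    ∑ x, optimalBet p0 o R x = 1 := by
  unfold optimalBet
  rw [← sum_div, ← renyiSum_eq_sum_rpow hp0 ho, div_self (renyiSum_pos hp0 ho).ne']

lemma expectedPowerWealth_optimalBet [Nonempty X] (hp0 : ∀ x, 0 < p0 x)
    (ho : ∀ k x, 0 < o k x) (hS : 1 + ∑ k, (R k - 1) ≠ 0) :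
    expectedPowerWealth p0 o (fun _ => optimalBet p0 o R) R =
      renyiSum p0 o R ^ (1 + ∑ k, (R k - 1)) := by
  set S := ∑ k, (R k - 1)
  set T := renyiSum p0 o R
  set α := renyiOrder R
  have hT : 0 < T := renyiSum_pos hp0 ho
  have hαS : α * -S + 1 = α := by
    rw [show α = (1 + S)⁻¹ from rfl]; field_simp; ring
  have hterm : ∀ x, p0 x * ∏ k, (optimalBet p0 o R x * o k x) ^ (1 - R k) =
      T ^ S * (p0 x * ∏ k, o k x ^ (1 - R k)) ^ α := by
    intro x
    set u := p0 x * ∏ k, o k x ^ (1 - R k)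
    have hu : 0 < u := mul_prod_rpow_pos hp0 ho x
    have hc := optimalBet_pos (R := R) hp0 ho x
    calc p0 x * ∏ k, (optimalBet p0 o R x * o k x) ^ (1 - R k)
        = optimalBet p0 o R x ^ (-S) * u := by
          rw [prod_congr rfl fun k _ => mul_rpow hc.le (ho k x).le, prod_mul_distrib,
            ← rpow_sum_of_pos hc]
          simp only [u, S, sum_sub_distrib]
          ring_nf
      _ = T ^ S * u ^ α := by
          rw [optimalBet, div_rpow (rpow_pos_of_pos hu _).le hT.le, ← rpow_mul hu.le,
            rpow_neg hT.le, div_inv_eq_mul, mul_right_comm, mul_comm, ← rpow_add_one hu.ne', hαS]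
  simp only [expectedPowerWealth, hterm, ← mul_sum]
  rw [← renyiSum_eq_sum_rpow hp0 ho, add_comm, rpow_add_one hT.ne']

lemma renyiSum_rpow_le_expectedPowerWealth (hp0 : ∀ x, 0 < p0 x) (ho : ∀ k x, 0 < o k x)
    (hR : ∀ k, 1 ≤ R k) {b : ι → X → ℝ} (hb : ∀ k x, 0 < b k x) (hb_sum : ∀ k, ∑ x, b k x = 1) :
    renyiSum p0 o R ^ (1 + ∑ k, (R k - 1)) ≤ expectedPowerWealth p0 o b R := by
  set S := ∑ k, (R k - 1)
  set α := renyiOrder R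
  set a : X → ℝ := fun x => p0 x * ∏ k, (b k x * o k x) ^ (1 - R k)
  have hS : 0 ≤ S := sum_nonneg fun k _ => sub_nonneg.2 (hR k)
  have hα : α = (1 + S)⁻¹ := rfl
  have hα_pos : 0 < α := inv_pos.2 (by linarith)
  have ha : ∀ x, 0 < a x := fun x =>
    mul_pos (hp0 x) (prod_pos fun k _ => rpow_pos_of_pos (mul_pos (hb k x) (ho k x)) _)
  have hsplit : ∀ x, (p0 x * ∏ k, o k x ^ (1 - R k)) ^ α =
      a x ^ α * ∏ k, b k x ^ ((R k - 1) * α) := by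
    intro x
    have hfactor : ∀ k, o k x ^ (1 - R k) = (b k x * o k x) ^ (1 - R k) * b k x ^ (R k - 1) := by
      intro k
      rw [mul_rpow (hb k x).le (ho k x).le, mul_right_comm, ← rpow_add (hb k x)]
      simp
    simp only [hfactor, prod_mul_distrib, ← mul_assoc]
    rw [mul_rpow (ha x).le (prod_nonneg fun k _ => (rpow_pos_of_pos (hb k x) _).le),
      ← finsetProd_rpow _ _ fun k _ => (rpow_pos_of_pos (hb k x) _).le]
    exact congrArg _ (prod_congr rfl fun k _ => (rpow_mul (hb k x).le _ _).symm)
  have hT : 0 ≤ renyiSum p0 o R := by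
    rw [renyiSum_eq_sum_rpow hp0 ho]
    exact sum_nonneg fun x _ => (rpow_pos_of_pos (mul_prod_rpow_pos hp0 ho x) _).le
  have holder : renyiSum p0 o R ≤ expectedPowerWealth p0 o b R ^ α := by
    rw [renyiSum_eq_sum_rpow hp0 ho, sum_congr rfl fun x _ => hsplit x]
    refine (sum_rpow_mul_prod_rpow_le univ (fun x => (ha x).le) (fun k _ x => (hb k x).le) α
      (by rw [← sum_mul, hα]; field_simp; ring) hα_pos.le
      fun k _ => mul_nonneg (sub_nonneg.2 (hR k)) hα_pos.le).trans_eq ?_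
    simp only [hb_sum, one_rpow, prod_const_one, mul_one]
    rfl
  calc renyiSum p0 o R ^ (1 + S)
      ≤ (expectedPowerWealth p0 o b R ^ α) ^ (1 + S) := rpow_le_rpow hT holder (by linarith)
    _ = expectedPowerWealth p0 o b R :=
        rpow_inv_rpow (sum_nonneg fun x _ => (ha x).le) (by linarith)

end

theorem multi_lottery_optimal_betting_fair_odds_general
    {X : Type*} [Fintype X] [Nonempty X] (d : ℕ)
    (p0 : X → ℝ) (o : Fin d → X → ℝ) (R : Fin d → ℝ)
    (hp0_pos : ∀ x, 0 < p0 x)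
    (ho_pos : ∀ k x, 0 < o k x)
    (hR : ∀ k, 1 ≤ R k) (hRsum : (d : ℝ) < ∑ k, R k) :
    IsGreatest
      {v : ℝ | ∃ b : Fin d → X → ℝ,
        (∀ k x, 0 < b k x) ∧ (∀ k, ∑ x, b k x = 1) ∧
        v = (∑ k, (1 - R k))⁻¹ *
          Real.log (∑ x, p0 x * ∏ k, (b k x * o k x) ^ (1 - R k))}
      ((((1 + ∑ k, (R k - 1))⁻¹) - 1)⁻¹ *
        Real.log (∑ x, (p0 x) ^ ((1 + ∑ k, (R k - 1))⁻¹) *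
          ∏ k, (1 / o k x) ^ ((R k - 1) * (1 + ∑ k', (R k' - 1))⁻¹))) := by
  have hS : 0 < ∑ k, (R k - 1) := by simpa [sum_sub_distrib] using hRsum
  have h1R : ∑ k, (1 - R k) = -∑ k, (R k - 1) := by simp [sum_sub_distrib]
  set S := ∑ k, (R k - 1)
  have hT := renyiSum_pos (R := R) hp0_pos ho_pos
  change IsGreatest _ ((renyiOrder R - 1)⁻¹ * log (renyiSum p0 o R))
  rw [show (renyiOrder R - 1)⁻¹ * log (renyiSum p0 o R) =
      (∑ k, (1 - R k))⁻¹ * log (renyiSum p0 o R ^ (1 + S)) by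
    rw [log_rpow hT, h1R, show renyiOrder R = (1 + S)⁻¹ from rfl]; field_simp [hS.ne']; ring]
  refine ⟨⟨fun _ => optimalBet p0 o R, fun _ => optimalBet_pos hp0_pos ho_pos,
    fun _ => sum_optimalBet hp0_pos ho_pos, ?_⟩, ?_⟩
  · rw [← expectedPowerWealth_optimalBet hp0_pos ho_pos (by positivity)]
    rfl
  · rintro v ⟨b, hb, hb_sum, rfl⟩
    refine mul_le_mul_of_nonpos_left (log_le_log (rpow_pos_of_pos hT _)
      (renyiSum_rpow_le_expectedPowerWealth hp0_pos ho_pos hR hb hb_sum)) ?_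
    rw [h1R, inv_nonpos, neg_nonpos]
    exact hS.le

/-- Multi-lottery optimal betting with fair odds (Corollary `c:c3`):
with `α₀ = (1 + ∑ₖ(Rₖ−1))⁻¹` and `αₖ = (Rₖ−1)α₀`, the maximum of the log
isoelastic certainty equivalent over all `d`-tuples of full-support betting
strategies equals the multivariate Rényi divergence
`D_α(p⁰, (o¹)⁻¹, …, (o^d)⁻¹)`. -/
theorem multi_lottery_optimal_betting_fair_odds
    {X : Type*} [Fintype X] [Nonempty X] (d : ℕ)
    (p0 : X → ℝ) (o : Fin d → X → ℝ) (R : Fin d → ℝ)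
    (hp0_pos : ∀ x, 0 < p0 x) (hp0_sum : ∑ x, p0 x = 1)
    (ho_pos : ∀ k x, 0 < o k x) (ho_fair : ∀ k, ∑ x, 1 / o k x = 1)
    (hR : ∀ k, 1 ≤ R k) (hRsum : (d : ℝ) < ∑ k, R k) :
    IsGreatest
      {v : ℝ | ∃ b : Fin d → X → ℝ,
        (∀ k x, 0 < b k x) ∧ (∀ k, ∑ x, b k x = 1) ∧
        v = (∑ k, (1 - R k))⁻¹ *
          Real.log (∑ x, p0 x * ∏ k, (b k x * o k x) ^ (1 - R k))}
      ((((1 + ∑ k, (R k - 1))⁻¹) - 1)⁻¹ *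
        Real.log (∑ x, (p0 x) ^ ((1 + ∑ k, (R k - 1))⁻¹) *
          ∏ k, (1 / o k x) ^ ((R k - 1) * (1 + ∑ k', (R k' - 1))⁻¹))) :=
  multi_lottery_optimal_betting_fair_odds_general d p0 o R hp0_pos ho_pos hR hRsum
end

section
/- Monotonicity of the multivariate Rényi divergence along the parameter path α^λ = (λ, (1−λ)γ₁, …, (1−λ)γ_d): for fixed full-support PMFs p⁰,…,p^d and fixed γₖ ≥ 0 with ∑ₖ γₖ = 1, the function λ ↦ D_{α^λ}(p⁰,…,p^d) = (1/(λ−1)) log ∑ₓ p⁰(x)^λ ∏ₖ pᵏ(x)^{(1−λ)γₖ} is nondecreasing on the region λ ≥ maxₖ γₖ/(γₖ+1), λ ≠ 1. -/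
open Finset Real

private lemma jensen_log' {X : Type*} [Fintype X] (w f : X → ℝ)
    (hw : ∀ x, 0 ≤ w x) (hw1 : ∑ x, w x = 1) (hf : ∀ x, 0 < f x) :
    ∑ x, w x * Real.log (f x) ≤ Real.log (∑ x, w x * f x) := by
  have := (strictConcaveOn_log_Ioi.concaveOn).le_map_sum
    (t := Finset.univ) (w := w) (p := f) (fun i _ => hw i) hw1 (fun i _ => hf i)
  simpa [smul_eq_mul] using this

private lemma jensen_rpow' {X : Type*} [Fintype X] (w f : X → ℝ)
    (hw : ∀ x, 0 ≤ w x) (hw1 : ∑ x, w x = 1) (hf : ∀ x, 0 ≤ f x)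
    {s : ℝ} (hs0 : 0 ≤ s) (hs1 : s ≤ 1) :
    ∑ x, w x * (f x) ^ s ≤ (∑ x, w x * f x) ^ s := by
  have := (Real.concaveOn_rpow hs0 hs1).le_map_sum
    (t := Finset.univ) (w := w) (p := f) (fun i _ => hw i) hw1
    (fun i _ => Set.mem_Ici.2 (hf i))
  simpa [smul_eq_mul] using this

private lemma power_mean_mono' {X : Type*} [Fintype X] [Nonempty X] (w Z : X → ℝ)
    (hw : ∀ x, 0 < w x) (hw1 : ∑ x, w x = 1) (hZ : ∀ x, 0 < Z x)
    {t₁ t₂ : ℝ} (h1 : t₁ ≠ 0) (h2 : t₂ ≠ 0) (h : t₁ ≤ t₂) :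
    (1 / t₁) * Real.log (∑ x, w x * Z x ^ t₁) ≤
      (1 / t₂) * Real.log (∑ x, w x * Z x ^ t₂) := by
  have hA : ∀ t : ℝ, 0 < ∑ x, w x * Z x ^ t := fun t =>
    Finset.sum_pos (fun x _ => mul_pos (hw x) (Real.rpow_pos_of_pos (hZ x) t))
      Finset.univ_nonempty
  -- Jensen for log: t * L ≤ log (∑ w Z^t)
  have hL : ∀ t : ℝ, t * (∑ x, w x * Real.log (Z x)) ≤
      Real.log (∑ x, w x * Z x ^ t) := by
    intro t
    have hj := jensen_log' w (fun x => Z x ^ t) (fun x => (hw x).le) hw1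
      (fun x => Real.rpow_pos_of_pos (hZ x) t)
    have e : ∑ x, w x * Real.log (Z x ^ t)
        = t * ∑ x, w x * Real.log (Z x) := by
      rw [Finset.mul_sum]
      exact Finset.sum_congr rfl fun x _ => by rw [Real.log_rpow (hZ x)]; ring
    linarith [hj, e.ge]
  rcases lt_or_gt_of_ne h1 with ht1 | ht1
  · rcases lt_or_gt_of_ne h2 with ht2 | ht2
    · -- t₁ ≤ t₂ < 0
      have hs0 : 0 ≤ t₂ / t₁ := div_nonneg_of_nonpos ht2.le ht1.le
      have hs1 : t₂ / t₁ ≤ 1 := by rw [div_le_iff_of_neg ht1]; linarith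
      have hrw : ∀ x, Z x ^ t₂ = (Z x ^ t₁) ^ (t₂ / t₁) := by
        intro x
        rw [← Real.rpow_mul (hZ x).le]
        congr 1
        field_simp
      have hJ := jensen_rpow' w (fun x => Z x ^ t₁) (fun x => (hw x).le) hw1
        (fun x => (Real.rpow_pos_of_pos (hZ x) _).le) hs0 hs1
      have hA2le : (∑ x, w x * Z x ^ t₂) ≤ (∑ x, w x * Z x ^ t₁) ^ (t₂ / t₁) := by
        calc (∑ x, w x * Z x ^ t₂) = ∑ x, w x * (Z x ^ t₁) ^ (t₂ / t₁) := by
              exact Finset.sum_congr rfl fun x _ => by rw [hrw x]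
          _ ≤ _ := hJ
      have hlog : Real.log (∑ x, w x * Z x ^ t₂)
          ≤ (t₂ / t₁) * Real.log (∑ x, w x * Z x ^ t₁) := by
        have := Real.log_le_log (hA t₂) hA2le
        rwa [Real.log_rpow (hA t₁)] at this
      have hc : (1:ℝ)/t₂ ≤ 0 := one_div_nonpos.2 ht2.le
      have hmul' : (1/t₂) * ((t₂/t₁) * Real.log (∑ x, w x * Z x ^ t₁))
          ≤ (1/t₂) * Real.log (∑ x, w x * Z x ^ t₂) :=
        mul_le_mul_of_nonpos_left hlog hc
      have heq : (1/t₂) * ((t₂/t₁) * Real.log (∑ x, w x * Z x ^ t₁))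
          = (1/t₁) * Real.log (∑ x, w x * Z x ^ t₁) := by
        field_simp
      linarith
    · -- t₁ < 0 < t₂
      set L := ∑ x, w x * Real.log (Z x) with hLdef
      have h1' : (1/t₁) * Real.log (∑ x, w x * Z x ^ t₁) ≤ L := by
        have hc : (1:ℝ)/t₁ ≤ 0 := one_div_nonpos.2 ht1.le
        have := mul_le_mul_of_nonpos_left (hL t₁) hc
        have e : (1/t₁) * (t₁ * L) = L := by field_simp
        linarith
      have h2' : L ≤ (1/t₂) * Real.log (∑ x, w x * Z x ^ t₂) := by
        have := mul_le_mul_of_nonneg_left (hL t₂)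
          (by positivity : (0:ℝ) ≤ 1/t₂)
        have e : (1/t₂) * (t₂ * L) = L := by field_simp
        linarith
      linarith
  · -- 0 < t₁ ≤ t₂
    have ht2 : 0 < t₂ := lt_of_lt_of_le ht1 h
    have hs0 : 0 ≤ t₁ / t₂ := by positivity
    have hs1 : t₁ / t₂ ≤ 1 := (div_le_one ht2).2 h
    have hrw : ∀ x, Z x ^ t₁ = (Z x ^ t₂) ^ (t₁ / t₂) := by
      intro x
      rw [← Real.rpow_mul (hZ x).le]
      congr 1
      field_simp
    have hJ := jensen_rpow' w (fun x => Z x ^ t₂) (fun x => (hw x).le) hw1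
      (fun x => (Real.rpow_pos_of_pos (hZ x) _).le) hs0 hs1
    have hA1le : (∑ x, w x * Z x ^ t₁) ≤ (∑ x, w x * Z x ^ t₂) ^ (t₁ / t₂) := by
      calc (∑ x, w x * Z x ^ t₁) = ∑ x, w x * (Z x ^ t₂) ^ (t₁ / t₂) := by
            exact Finset.sum_congr rfl fun x _ => by rw [hrw x]
        _ ≤ _ := hJ
    have hlog : Real.log (∑ x, w x * Z x ^ t₁)
        ≤ (t₁ / t₂) * Real.log (∑ x, w x * Z x ^ t₂) := by
      have := Real.log_le_log (hA t₁) hA1le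
      rwa [Real.log_rpow (hA t₂)] at this
    have hmul := mul_le_mul_of_nonneg_left hlog (by positivity : (0:ℝ) ≤ 1/t₁)
    have heq : (1/t₁) * ((t₁/t₂) * Real.log (∑ x, w x * Z x ^ t₂))
        = (1/t₂) * Real.log (∑ x, w x * Z x ^ t₂) := by
      field_simp
    linarith

/-- Monotonicity of the multivariate Rényi divergence along the parameter
path `α^λ = (λ, (1−λ)γ₁, …, (1−λ)γ_d)`: the map
`λ ↦ (1/(λ−1)) log ∑ₓ p⁰(x)^λ ∏ₖ pᵏ(x)^{(1−λ)γₖ}` is nondecreasing on the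
region `λ ≥ maxₖ γₖ/(γₖ+1)`, `λ ≠ 1`. -/
theorem multivariate_renyi_monotone_in_order
    {X : Type*} [Fintype X] [Nonempty X] (d : ℕ)
    (p0 : X → ℝ) (p : Fin d → X → ℝ) (γ : Fin d → ℝ)
    (hp0_pos : ∀ x, 0 < p0 x) (hp0_sum : ∑ x, p0 x = 1)
    (hp_pos : ∀ k x, 0 < p k x) (hp_sum : ∀ k, ∑ x, p k x = 1)
    (hγ_nonneg : ∀ k, 0 ≤ γ k) (hγ_sum : ∑ k, γ k = 1)
    (l₁ l₂ : ℝ)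
    (hl₁ : ∀ k, γ k / (γ k + 1) ≤ l₁) (hl₁_ne : l₁ ≠ 1)
    (hl₂ : ∀ k, γ k / (γ k + 1) ≤ l₂) (hl₂_ne : l₂ ≠ 1)
    (hle : l₁ ≤ l₂) :
    (1 / (l₁ - 1)) *
        Real.log (∑ x, (p0 x) ^ l₁ * ∏ k, (p k x) ^ ((1 - l₁) * γ k)) ≤
      (1 / (l₂ - 1)) *
        Real.log (∑ x, (p0 x) ^ l₂ * ∏ k, (p k x) ^ ((1 - l₂) * γ k)) := by
  have hr : ∀ x, 0 < ∏ k, (p k x) ^ (γ k) := fun x =>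
    Finset.prod_pos fun k _ => Real.rpow_pos_of_pos (hp_pos k x) _
  have key : ∀ (l : ℝ) (x : X),
      p0 x ^ l * ∏ k, p k x ^ ((1 - l) * γ k)
        = p0 x * (p0 x / ∏ k, (p k x) ^ (γ k)) ^ (l - 1) := by
    intro l x
    have e1 : ∏ k, p k x ^ ((1 - l) * γ k) = (∏ k, p k x ^ γ k) ^ (1 - l) := by
      rw [← Real.finset_prod_rpow _ _ (fun k _ => (Real.rpow_pos_of_pos (hp_pos k x) _).le)]
      exact Finset.prod_congr rfl fun k _ => by
        rw [← Real.rpow_mul (hp_pos k x).le, mul_comm]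
    rw [e1, Real.div_rpow (hp0_pos x).le (hr x).le]
    have e2 : (∏ k, p k x ^ γ k) ^ (1 - l) = ((∏ k, p k x ^ γ k) ^ (l - 1))⁻¹ := by
      rw [← Real.rpow_neg (hr x).le]
      norm_num
    have e3 : p0 x ^ l = p0 x * p0 x ^ (l - 1) := by
      nth_rewrite 2 [← Real.rpow_one (p0 x)]
      rw [← Real.rpow_add (hp0_pos x)]
      norm_num
    rw [e2, e3]
    ring
  have h1 : ∀ l : ℝ, (∑ x, p0 x ^ l * ∏ k, p k x ^ ((1 - l) * γ k))
      = ∑ x, p0 x * (p0 x / ∏ k, (p k x) ^ (γ k)) ^ (l - 1) :=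
    fun l => Finset.sum_congr rfl fun x _ => key l x
  rw [h1 l₁, h1 l₂]
  exact power_mean_mono' p0 (fun x => p0 x / ∏ k, (p k x) ^ (γ k)) hp0_pos hp0_sum
    (fun x => div_pos (hp0_pos x) (hr x))
    (sub_ne_zero.2 hl₁_ne) (sub_ne_zero.2 hl₂_ne) (by linarith)
end

section
/- Limit of the multivariate Rényi divergence along the path at λ → 1: with notation as above, lim_{λ→1} D_{α^λ}(p⁰,…,p^d) = ∑_{k=1}^d γₖ · D_KL(p⁰ ‖ pᵏ), where D_KL(p‖q) = ∑ₓ p(x) log(p(x)/q(x)). -/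
/-!
Write the summand as `p⁰(x)^λ g(x)^(1-λ)` with `g(x) = ∏ₖ pᵏ(x)^γₖ` the weighted geometric mean.
Then `S(λ) = ∑ₓ p⁰(x)^λ g(x)^(1-λ)` is differentiable with `S(1) = 1`, so the divergence
`log S(λ) / (λ - 1)` is a difference quotient of `log ∘ S` at `1` and tends to
`S'(1) = ∑ₓ p⁰(x) log (p⁰(x) / g(x))`, which splits into `∑ₖ γₖ D_KL(p⁰ ‖ pᵏ)` because `∑ₖ γₖ = 1`.
-/

open Real Finset Filter Topology

theorem Real.hasDerivAt_sum_rpow_mul_rpow_one_sub {ι : Type*} [Fintype ι] {a b : ι → ℝ}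
    (ha : ∀ i, 0 < a i) (hb : ∀ i, 0 < b i) (t : ℝ) :
    HasDerivAt (fun l => ∑ i, a i ^ l * b i ^ (1 - l))
      (∑ i, a i ^ t * b i ^ (1 - t) * log (a i / b i)) t := by
  refine HasDerivAt.fun_sum fun i _ => ?_
  have hpow_a := (hasDerivAt_id' t).const_rpow (ha i)
  have hpow_b := ((hasDerivAt_id' t).const_sub 1).const_rpow (hb i)
  refine (hpow_a.fun_mul hpow_b).congr_deriv ?_
  rw [log_div (ha i).ne' (hb i).ne']
  ring

theorem tendsto_one_div_sub_one_mul_log_of_hasDerivAt {f : ℝ → ℝ} {D : ℝ}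
    (hf : HasDerivAt f D 1) (hf_one : f 1 = 1) :
    Tendsto (fun l => 1 / (l - 1) * log (f l)) (𝓝[≠] 1) (𝓝 D) := by
  have hlog : HasDerivAt (fun l => log (f l)) D 1 := by
    simpa [hf_one] using hf.log (by simp [hf_one])
  refine (hasDerivAt_iff_tendsto_slope.mp hlog).congr fun l => ?_
  rw [slope_def_field, hf_one, log_one, sub_zero, one_div_mul_eq_div]

theorem Real.prod_rpow_mul_eq_rpow_prod {ι : Type*} [Fintype ι] {p γ : ι → ℝ}
    (hp : ∀ k, 0 ≤ p k) (c : ℝ) :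
    ∏ k, p k ^ (c * γ k) = (∏ k, p k ^ γ k) ^ c := by
  simp_rw [mul_comm c, rpow_mul (hp _)]
  exact finsetProd_rpow _ _ (fun k _ => rpow_nonneg (hp k) _) c

theorem Real.sum_mul_log_div_prod_rpow {ι κ : Type*} [Fintype ι] [Fintype κ] {a : ι → ℝ}
    {p : κ → ι → ℝ} {γ : κ → ℝ} (ha : ∀ i, a i ≠ 0) (hp : ∀ k i, 0 < p k i)
    (hγ : ∑ k, γ k = 1) :
    ∑ i, a i * log (a i / ∏ k, p k i ^ γ k) = ∑ k, γ k * ∑ i, a i * log (a i / p k i) := by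
  have hlog_geom : ∀ i, log (∏ k, p k i ^ γ k) = ∑ k, γ k * log (p k i) := fun i => by
    rw [log_prod fun k _ => (rpow_pos_of_pos (hp k i) _).ne']
    exact sum_congr rfl fun k _ => log_rpow (hp k i) _
  simp_rw [mul_sum]
  rw [sum_comm]
  refine sum_congr rfl fun i _ => ?_
  rw [log_div (ha i) (prod_pos fun k _ => rpow_pos_of_pos (hp k i) _).ne', hlog_geom]
  simp_rw [log_div (ha i) (hp _ i).ne']
  calc a i * (log (a i) - ∑ k, γ k * log (p k i))
      = (∑ k, γ k) * (a i * log (a i)) - a i * ∑ k, γ k * log (p k i) := by rw [hγ]; ring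
    _ = ∑ k, γ k * (a i * (log (a i) - log (p k i))) := by
      rw [sum_mul, mul_sum, ← sum_sub_distrib]
      exact sum_congr rfl fun k _ => by ring

theorem multivariate_renyi_limit_at_one_general
    {X : Type*} [Fintype X] (d : ℕ)
    (p0 : X → ℝ) (p : Fin d → X → ℝ) (γ : Fin d → ℝ)
    (hp0_pos : ∀ x, 0 < p0 x) (hp0_sum : ∑ x, p0 x = 1)
    (hp_pos : ∀ k x, 0 < p k x)
    (hγ_sum : ∑ k, γ k = 1) :
    Filter.Tendsto
      (fun l : ℝ => (1 / (l - 1)) *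
        Real.log (∑ x, (p0 x) ^ l * ∏ k, (p k x) ^ ((1 - l) * γ k)))
      (nhdsWithin 1 {1}ᶜ)
      (nhds (∑ k, γ k * ∑ x, p0 x * Real.log (p0 x / p k x))) := by
  set g : X → ℝ := fun x => ∏ k, p k x ^ γ k
  have hg_pos : ∀ x, 0 < g x := fun x => prod_pos fun k _ => rpow_pos_of_pos (hp_pos k x) _
  have hS := hasDerivAt_sum_rpow_mul_rpow_one_sub hp0_pos hg_pos 1
  simp only [rpow_one, sub_self, rpow_zero, mul_one] at hS
  rw [← sum_mul_log_div_prod_rpow (fun x => (hp0_pos x).ne') hp_pos hγ_sum]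
  simp_rw [prod_rpow_mul_eq_rpow_prod fun k => (hp_pos k _).le]
  exact tendsto_one_div_sub_one_mul_log_of_hasDerivAt hS (by simpa using hp0_sum)

/-- Limit of the multivariate Rényi divergence along the path at `λ → 1`:
it converges to the γ-weighted sum of Kullback–Leibler divergences
`∑ₖ γₖ D_KL(p⁰ ‖ pᵏ)`. -/
theorem multivariate_renyi_limit_at_one
    {X : Type*} [Fintype X] [Nonempty X] (d : ℕ)
    (p0 : X → ℝ) (p : Fin d → X → ℝ) (γ : Fin d → ℝ)
    (hp0_pos : ∀ x, 0 < p0 x) (hp0_sum : ∑ x, p0 x = 1)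
    (hp_pos : ∀ k x, 0 < p k x) (hp_sum : ∀ k, ∑ x, p k x = 1)
    (hγ_nonneg : ∀ k, 0 ≤ γ k) (hγ_sum : ∑ k, γ k = 1) :
    Filter.Tendsto
      (fun l : ℝ => (1 / (l - 1)) *
        Real.log (∑ x, (p0 x) ^ l * ∏ k, (p k x) ^ ((1 - l) * γ k)))
      (nhdsWithin 1 {1}ᶜ)
      (nhds (∑ k, γ k * ∑ x, p0 x * Real.log (p0 x / p k x))) :=
  multivariate_renyi_limit_at_one_general d p0 p γ hp0_pos hp0_sum hp_pos hγ_sum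
end

section
/- Limit λ → ∞ of the multivariate Rényi divergence along the path equals the max-divergence: lim_{λ→∞} D_{α^λ}(p⁰,…,p^d) = sup_{λ>1} D_{α^λ}(p⁰,…,p^d) = max_{x∈X} log( p⁰(x) / ∏_{k=1}^d pᵏ(x)^{γₖ} ). -/
/-!
With `c x = log (p⁰ x / ∏ₖ pᵏ x ^ γₖ)` the summand of the divergence at `λ` is
`p⁰ x * exp ((λ - 1) * c x)`, so with `t = λ - 1` the divergence is the scaled log-sum-exp
`t⁻¹ * log (∑ₓ p⁰ x * exp (t * c x))`. As the weights `p⁰` sum to `1` it is at most `max c`,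
and keeping only a maximizing term `x₀` bounds it below by `max c + t⁻¹ * log (p⁰ x₀)`;
both bounds tend to `max c`.
-/

open Filter Topology Real Finset

section LogSumExp

variable {ι : Type*} {s : Finset ι} {w : ι → ℝ} (c : ι → ℝ)

theorem inv_mul_log_sum_mul_exp_le_sup' (hs : s.Nonempty) (hw_pos : ∀ i ∈ s, 0 < w i)
    (hw_sum : ∑ i ∈ s, w i = 1) {t : ℝ} (ht : 0 < t) :
    t⁻¹ * log (∑ i ∈ s, w i * exp (t * c i)) ≤ s.sup' hs c := by
  have hsum : ∑ i ∈ s, w i * exp (t * c i) ≤ exp (t * s.sup' hs c) :=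
    calc ∑ i ∈ s, w i * exp (t * c i) ≤ ∑ i ∈ s, w i * exp (t * s.sup' hs c) := by
          gcongr with i hi
          · exact (hw_pos i hi).le
          · exact le_sup' c hi
      _ = exp (t * s.sup' hs c) := by rw [← sum_mul, hw_sum, one_mul]
  have hpos : 0 < ∑ i ∈ s, w i * exp (t * c i) :=
    sum_pos (fun i hi => mul_pos (hw_pos i hi) (exp_pos _)) hs
  rw [inv_mul_le_iff₀ ht, ← log_exp (t * _)]
  exact log_le_log hpos hsum

theorem add_inv_mul_log_le_inv_mul_log_sum_mul_exp (hw_pos : ∀ i ∈ s, 0 < w i) {i : ι}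
    (hi : i ∈ s) {t : ℝ} (ht : 0 < t) :
    c i + t⁻¹ * log (w i) ≤ t⁻¹ * log (∑ j ∈ s, w j * exp (t * c j)) := by
  have hterm : w i * exp (t * c i) ≤ ∑ j ∈ s, w j * exp (t * c j) :=
    single_le_sum (f := fun j => w j * exp (t * c j))
      (fun j hj => (mul_pos (hw_pos j hj) (exp_pos _)).le) hi
  have hlog := log_le_log (mul_pos (hw_pos i hi) (exp_pos _)) hterm
  rw [log_mul (hw_pos i hi).ne' (exp_pos _).ne', log_exp] at hlog
  calc c i + t⁻¹ * log (w i) = t⁻¹ * (log (w i) + t * c i) := by field_simp; ring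
    _ ≤ _ := by gcongr

theorem tendsto_inv_mul_log_sum_mul_exp (hs : s.Nonempty) (hw_pos : ∀ i ∈ s, 0 < w i)
    (hw_sum : ∑ i ∈ s, w i = 1) :
    Tendsto (fun t => t⁻¹ * log (∑ i ∈ s, w i * exp (t * c i))) atTop (𝓝 (s.sup' hs c)) := by
  obtain ⟨i, hi, hmax⟩ := exists_mem_eq_sup' hs c
  have hlower : Tendsto (fun t => c i + t⁻¹ * log (w i)) atTop (𝓝 (s.sup' hs c)) := by
    simpa [hmax] using tendsto_const_nhds.add (tendsto_inv_atTop_zero.mul_const (log (w i)))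
  refine tendsto_of_tendsto_of_tendsto_of_le_of_le' hlower tendsto_const_nhds ?_ ?_
  · filter_upwards [eventually_gt_atTop 0] with t ht
    exact add_inv_mul_log_le_inv_mul_log_sum_mul_exp c hw_pos hi ht
  · filter_upwards [eventually_gt_atTop 0] with t ht
    exact inv_mul_log_sum_mul_exp_le_sup' c hs hw_pos hw_sum ht

end LogSumExp

theorem rpow_mul_prod_rpow_eq_mul_exp {κ : Type*} [Fintype κ] {a : ℝ} (ha : 0 < a)
    {b : κ → ℝ} (hb : ∀ k, 0 < b k) (γ : κ → ℝ) (l : ℝ) :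
    a ^ l * ∏ k, b k ^ ((1 - l) * γ k) = a * exp ((l - 1) * log (a / ∏ k, b k ^ γ k)) := by
  simp only [rpow_def_of_pos ha, rpow_def_of_pos (hb _), ← exp_sum]
  rw [log_div ha.ne' (exp_pos _).ne', log_exp, ← exp_add]
  conv_rhs => arg 1; rw [← exp_log ha]
  rw [← exp_add, mul_sub, mul_sum]
  congr 1
  have hsum : ∑ k, log (b k) * ((1 - l) * γ k) = -∑ k, (l - 1) * (log (b k) * γ k) := by
    rw [← sum_neg_distrib]
    exact sum_congr rfl fun _ _ => by ring
  rw [hsum]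
  ring

theorem multivariate_renyi_limit_at_top_general
    {X : Type*} [Fintype X] [Nonempty X] (d : ℕ)
    (p0 : X → ℝ) (p : Fin d → X → ℝ) (γ : Fin d → ℝ)
    (hp0_pos : ∀ x, 0 < p0 x) (hp0_sum : ∑ x, p0 x = 1)
    (hp_pos : ∀ k x, 0 < p k x) :
    Filter.Tendsto
      (fun l : ℝ => (1 / (l - 1)) *
        Real.log (∑ x, (p0 x) ^ l * ∏ k, (p k x) ^ ((1 - l) * γ k)))
      Filter.atTop
      (nhds (Finset.univ.sup' Finset.univ_nonempty
        (fun x => Real.log (p0 x / ∏ k, (p k x) ^ (γ k))))) ∧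
    IsLUB
      {v : ℝ | ∃ l : ℝ, 1 < l ∧
        v = (1 / (l - 1)) *
          Real.log (∑ x, (p0 x) ^ l * ∏ k, (p k x) ^ ((1 - l) * γ k))}
      (Finset.univ.sup' Finset.univ_nonempty
        (fun x => Real.log (p0 x / ∏ k, (p k x) ^ (γ k)))) := by
  set c : X → ℝ := fun x => log (p0 x / ∏ k, p k x ^ γ k)
  simp_rw [rpow_mul_prod_rpow_eq_mul_exp (hp0_pos _) (hp_pos · _), one_div]
  have hw_pos : ∀ x ∈ univ, 0 < p0 x := fun x _ => hp0_pos x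
  have hlim : Tendsto (fun l : ℝ => (l - 1)⁻¹ * log (∑ x, p0 x * exp ((l - 1) * c x)))
      atTop (𝓝 (univ.sup' univ_nonempty c)) :=
    (tendsto_inv_mul_log_sum_mul_exp c univ_nonempty hw_pos hp0_sum).comp
      (tendsto_atTop_add_const_right _ (-1) tendsto_id)
  refine ⟨hlim, ?_, fun b hb => le_of_tendsto hlim ?_⟩
  · rintro v ⟨l, hl, rfl⟩
    exact inv_mul_log_sum_mul_exp_le_sup' c univ_nonempty hw_pos hp0_sum (sub_pos.2 hl)
  · filter_upwards [eventually_gt_atTop 1] with l hl using hb ⟨l, hl, rfl⟩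

/-- Limit `λ → ∞` of the multivariate Rényi divergence along the path: it
converges to, and its supremum over `λ > 1` equals, the max-divergence
`maxₓ log(p⁰(x)/∏ₖ pᵏ(x)^{γₖ})`. -/
theorem multivariate_renyi_limit_at_top
    {X : Type*} [Fintype X] [Nonempty X] (d : ℕ)
    (p0 : X → ℝ) (p : Fin d → X → ℝ) (γ : Fin d → ℝ)
    (hp0_pos : ∀ x, 0 < p0 x) (hp0_sum : ∑ x, p0 x = 1)
    (hp_pos : ∀ k x, 0 < p k x) (hp_sum : ∀ k, ∑ x, p k x = 1)
    (hγ_nonneg : ∀ k, 0 ≤ γ k) (hγ_sum : ∑ k, γ k = 1) :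
    Filter.Tendsto
      (fun l : ℝ => (1 / (l - 1)) *
        Real.log (∑ x, (p0 x) ^ l * ∏ k, (p k x) ^ ((1 - l) * γ k)))
      Filter.atTop
      (nhds (Finset.univ.sup' Finset.univ_nonempty
        (fun x => Real.log (p0 x / ∏ k, (p k x) ^ (γ k))))) ∧
    IsLUB
      {v : ℝ | ∃ l : ℝ, 1 < l ∧
        v = (1 / (l - 1)) *
          Real.log (∑ x, (p0 x) ^ l * ∏ k, (p k x) ^ ((1 - l) * γ k))}
      (Finset.univ.sup' Finset.univ_nonempty
        (fun x => Real.log (p0 x / ∏ k, (p k x) ^ (γ k)))) :=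
  multivariate_renyi_limit_at_top_general d p0 p γ hp0_pos hp0_sum hp_pos
end

section
/- Nonnegativity of the informativeness measure: for a joint full-support PMF p_{XA} on finite X × A with marginals p_X, p_A and conditionals p_{X|A}, and PMFs r¹,…,r^d on X, the quantity 𝒟 := D_{α,α₀}(p_{X|A}, r¹,…,r^d | p_A) − D_α(p_X, r¹,…,r^d) satisfies 𝒟 ≥ 0, for admissible orders with α₀ = maxₖ αₖ. -/
/-!
Write `c x = ∏ₖ (rᵏ x) ^ αₖ` and `p = α₀`, which is positive as the largest of numbers summing
to `1`, and put `g_a x = p_{XA}(x,a) · c(x) ^ (1/p)`.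
By homogeneity of the `p`-norm, the conditional term is `∑ₐ ‖g_a‖_p`, while the unconditional
term is `‖∑ₐ g_a‖_p ^ p`. Minkowski's inequality compares the two, in the direction that matches
the sign of the prefactor `p / (p - 1)`: `‖∑ₐ g_a‖_p ≤ ∑ₐ ‖g_a‖_p` for `p > 1`, and the reverse
inequality for nonnegative functions when `0 < p < 1`.
-/

open Finset Real

section Minkowski

variable {ι Y : Type*} (s : Finset ι) (t : Finset Y) {p : ℝ} {f : ι → Y → ℝ}

theorem Lp_sum_le_sum_Lp_of_nonneg (hp : 1 ≤ p) (hf : ∀ i x, 0 ≤ f i x) :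
    (∑ x ∈ t, (∑ i ∈ s, f i x) ^ p) ^ (1 / p) ≤ ∑ i ∈ s, (∑ x ∈ t, f i x ^ p) ^ (1 / p) := by
  have hp0 : p ≠ 0 := by linarith
  induction s using Finset.cons_induction with
  | empty => simp [zero_rpow hp0, zero_rpow (inv_ne_zero hp0)]
  | cons i s hi ih =>
    simp only [sum_cons]
    exact (Lp_add_le_of_nonneg (s := t) hp (fun x _ => hf i x)
      (fun x _ => sum_nonneg fun j _ => hf j x)).trans (add_le_add_right ih _)

/-- Minkowski with exponent `1 / p ≥ 1`, applied to `f ^ p` with the roles of the indices swapped. -/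
theorem sum_Lp_le_Lp_sum_of_nonneg (hp : 0 < p) (hp1 : p ≤ 1) (hf : ∀ i x, 0 ≤ f i x) :
    ∑ i ∈ s, (∑ x ∈ t, f i x ^ p) ^ (1 / p) ≤ (∑ x ∈ t, (∑ i ∈ s, f i x) ^ p) ^ (1 / p) := by
  have hp0 : p ≠ 0 := hp.ne'
  have hminkowski := Lp_sum_le_sum_Lp_of_nonneg t s (f := fun x i => f i x ^ p)
    (one_le_one_div hp hp1) fun x i => rpow_nonneg (hf i x) p
  simp only [one_div_one_div, ← rpow_mul (hf _ _), mul_one_div_cancel hp0, rpow_one]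
    at hminkowski
  have hL : 0 ≤ ∑ i ∈ s, (∑ x ∈ t, f i x ^ p) ^ (1 / p) :=
    sum_nonneg fun i _ => rpow_nonneg (sum_nonneg fun x _ => rpow_nonneg (hf i x) p) _
  calc ∑ i ∈ s, (∑ x ∈ t, f i x ^ p) ^ (1 / p)
      = ((∑ i ∈ s, (∑ x ∈ t, f i x ^ p) ^ (1 / p)) ^ p) ^ (1 / p) := by
        rw [← rpow_mul hL, mul_one_div_cancel hp0, rpow_one]
    _ ≤ (∑ x ∈ t, (∑ i ∈ s, f i x) ^ p) ^ (1 / p) := by gcongr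

end Minkowski

section Homogeneity

variable {Y : Type*} {p : ℝ}

theorem mul_rpow_one_div_rpow {u c : ℝ} (hu : 0 ≤ u) (hc : 0 ≤ c) (hp : p ≠ 0) :
    (u * c ^ (1 / p)) ^ p = u ^ p * c := by
  rw [mul_rpow hu (rpow_nonneg hc _), ← rpow_mul hc, one_div_mul_cancel hp, rpow_one]

theorem mul_sum_div_rpow_mul_rpow_one_div (s : Finset Y) {t : ℝ} (ht : 0 < t) (hp : p ≠ 0)
    {u c : Y → ℝ} (hu : ∀ x, 0 ≤ u x) (hc : ∀ x, 0 ≤ c x) :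
    t * (∑ x ∈ s, (u x / t) ^ p * c x) ^ (1 / p) = (∑ x ∈ s, u x ^ p * c x) ^ (1 / p) := by
  have hsum : ∑ x ∈ s, (u x / t) ^ p * c x = (∑ x ∈ s, u x ^ p * c x) / t ^ p := by
    rw [sum_div]
    exact sum_congr rfl fun x _ => by rw [div_rpow (hu x) ht.le]; ring
  have hnum : 0 ≤ ∑ x ∈ s, u x ^ p * c x :=
    sum_nonneg fun x _ => mul_nonneg (rpow_nonneg (hu x) _) (hc x)
  rw [hsum, div_rpow hnum (rpow_nonneg ht.le _), ← rpow_mul ht.le, mul_one_div_cancel hp,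
    rpow_one, mul_div_cancel₀ _ ht.ne']

end Homogeneity

theorem div_sub_one_mul_log_sub_one_div_mul_log_nonneg {p S T : ℝ} (hp : 0 < p) (hp1 : p ≠ 1)
    (hS : 0 < S) (hT : 0 < T) (hlt : p < 1 → S ≤ T ^ (1 / p)) (hgt : 1 < p → T ^ (1 / p) ≤ S) :
    0 ≤ p / (p - 1) * log S - 1 / (p - 1) * log T := by
  have hrw : p / (p - 1) * log S - 1 / (p - 1) * log T
      = p / (p - 1) * (log S - log (T ^ (1 / p))) := by
    rw [log_rpow hT]; field_simp
  rw [hrw]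
  rcases hp1.lt_or_gt with h | h
  · refine mul_nonneg_of_nonpos_of_nonpos (div_nonpos_of_nonneg_of_nonpos hp.le (by linarith)) ?_
    exact sub_nonpos.mpr (log_le_log hS (hlt h))
  · refine mul_nonneg (div_nonneg hp.le (by linarith)) ?_
    exact sub_nonneg.mpr (log_le_log (rpow_pos_of_pos hT _) (hgt h))
theorem informativeness_measure_nonneg_general
    {X A : Type*} [Fintype X] [Fintype A] [Nonempty X] [Nonempty A] (d : ℕ)
    (pXA : X → A → ℝ) (r : Fin d → X → ℝ)
    (α : Fin (d + 1) → ℝ)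
    (hpXA_pos : ∀ x a, 0 < pXA x a)
    (hr_pos : ∀ k x, 0 < r k x)
    (hα_sum : ∑ k, α k = 1)
    (hα0_max : ∀ k, α k ≤ α 0) (hα0_ne : α 0 ≠ 1) :
    0 ≤
      (α 0 / (α 0 - 1)) * Real.log
          (∑ a, (∑ x, pXA x a) *
            (∑ x, ((pXA x a / (∑ x', pXA x' a)) ^ (α 0) *
              ∏ k : Fin d, (r k x) ^ (α k.succ))) ^ (1 / α 0)) -
        (1 / (α 0 - 1)) * Real.log
          (∑ x, ((∑ a, pXA x a) ^ (α 0) *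
            ∏ k : Fin d, (r k x) ^ (α k.succ))) := by
  set p := α 0
  have hp : 0 < p := by
    by_contra! hp
    have : ∑ k, α k ≤ 0 := sum_nonpos fun k _ => (hα0_max k).trans hp
    linarith
  set c : X → ℝ := fun x => ∏ k : Fin d, r k x ^ α k.succ
  have hc : ∀ x, 0 < c x := fun x => prod_pos fun k _ => rpow_pos_of_pos (hr_pos k x) _
  set g : A → X → ℝ := fun a x => pXA x a * c x ^ (1 / p)
  have hg : ∀ a x, 0 < g a x := fun a x => mul_pos (hpXA_pos x a) (rpow_pos_of_pos (hc x) _)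
  have hconditional : ∑ a, (∑ x, pXA x a) * (∑ x, (pXA x a / ∑ x', pXA x' a) ^ p * c x) ^ (1 / p)
      = ∑ a, (∑ x, g a x ^ p) ^ (1 / p) := sum_congr rfl fun a _ => by
    rw [mul_sum_div_rpow_mul_rpow_one_div _ (sum_pos (fun x _ => hpXA_pos x a) univ_nonempty)
      hp.ne' (fun x => (hpXA_pos x a).le) fun x => (hc x).le]
    simp only [g, mul_rpow_one_div_rpow (hpXA_pos _ a).le (hc _).le hp.ne']
  have hmarginal : ∑ x, (∑ a, pXA x a) ^ p * c x = ∑ x, (∑ a, g a x) ^ p := sum_congr rfl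
    fun x _ => by
      rw [← mul_rpow_one_div_rpow (sum_nonneg fun a _ => (hpXA_pos x a).le) (hc x).le hp.ne',
        sum_mul]
  rw [hconditional, hmarginal]
  exact div_sub_one_mul_log_sub_one_div_mul_log_nonneg hp hα0_ne
    (sum_pos (fun a _ => rpow_pos_of_pos (sum_pos (fun x _ => rpow_pos_of_pos (hg a x) _)
      univ_nonempty) _) univ_nonempty)
    (sum_pos (fun x _ => rpow_pos_of_pos (sum_pos (fun a _ => hg a x) univ_nonempty) _)
      univ_nonempty)
    (fun h => sum_Lp_le_Lp_sum_of_nonneg _ _ hp h.le fun a x => (hg a x).le)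
    (fun h => Lp_sum_le_sum_Lp_of_nonneg _ _ h.le fun a x => (hg a x).le)

/-- Nonnegativity of the informativeness measure: for a full-support joint
PMF `p_{XA}`, the conditional multivariate Rényi divergence (given the
marginal `p_A`, with conditionals `p_{X|A}`) dominates the unconditional one
with the marginal `p_X`, so their difference is nonnegative. -/
theorem informativeness_measure_nonneg
    {X A : Type*} [Fintype X] [Fintype A] [Nonempty X] [Nonempty A] (d : ℕ)
    (pXA : X → A → ℝ) (r : Fin d → X → ℝ)
    (α : Fin (d + 1) → ℝ)
    (hpXA_pos : ∀ x a, 0 < pXA x a) (hpXA_sum : ∑ x, ∑ a, pXA x a = 1)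
    (hr_pos : ∀ k x, 0 < r k x) (hr_sum : ∀ k, ∑ x, r k x = 1)
    (hα_sum : ∑ k, α k = 1)
    (hα_cond : (∀ k, 0 ≤ α k) ∨
      (1 < α 0 ∧ ∀ k : Fin d, α k.succ ≤ 0))
    (hα0_max : ∀ k, α k ≤ α 0) (hα0_ne : α 0 ≠ 1) :
    0 ≤
      (α 0 / (α 0 - 1)) * Real.log
          (∑ a, (∑ x, pXA x a) *
            (∑ x, ((pXA x a / (∑ x', pXA x' a)) ^ (α 0) *
              ∏ k : Fin d, (r k x) ^ (α k.succ))) ^ (1 / α 0)) -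
        (1 / (α 0 - 1)) * Real.log
          (∑ x, ((∑ a, pXA x a) ^ (α 0) *
            ∏ k : Fin d, (r k x) ^ (α k.succ))) :=
  informativeness_measure_nonneg_general d pXA r α hpXA_pos hr_pos hα_sum hα0_max hα0_ne
end
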